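/- arXiv:1807.09132 — 5 statements merged into one kernel-verified Lean document; each statement's English description precedes it below -/
import Mathlib

section
/- Let (Ω, F, P) be a probability space, {F_n} an increasing sequence of σ-algebras (a filtration), and let v_n, a_n, b_n, c_n be nonnegative real-valued random variables adapted to {F_n}. If for every n the conditional expectation satisfies E[v_{n+1} | F_n] ≤ v_n (1 + a_n) + b_n − c_n almost surely, and if Σ_{n=1}^∞ a_n < ∞ and Σ_{n=1}^∞ b_n < ∞ almost surely, then with probability one the sequence {v_n} converges (to a finite limit) and Σ_{n=1}^∞ c_n < ∞. -/
/-!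
Put `A n = ∏_{k<n} (1 + a k)`. Dividing the recursion by `A (n + 1)` shows that
`u n = v n / A n + ∑_{k<n} (c k - b k) / A (k + 1)` is a supermartingale, bounded below
by `-B n` with `B n = ∑_{k<n} b k / A (k + 1)`. As `B (n + 1)` is `ℱ n`-measurable,
stopping `u` when `B` first exceeds `M` leaves a supermartingale bounded below by `-M`,
which converges a.s. by Doob's theorem; since `B ≤ ∑ b < ∞`, it follows that `u`
converges a.s. Finally `A` converges when `∑ a < ∞`, so along a path where `u` converges
the partial sums of `c / A`, hence of `c`, are bounded, and
`v n = A n * (u n - ∑_{k<n} (c k - b k) / A (k + 1))` converges.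
-/

open Filter Finset
open scoped Topology

noncomputable def compoundFactor (a : ℕ → ℝ) (n : ℕ) : ℝ := ∏ k ∈ range n, (1 + a k)

noncomputable def discountedSum (a b : ℕ → ℝ) (n : ℕ) : ℝ :=
  ∑ k ∈ range n, b k / compoundFactor a (k + 1)

noncomputable def discountedPotential (v a b c : ℕ → ℝ) (n : ℕ) : ℝ :=
  v n / compoundFactor a n + discountedSum a c n - discountedSum a b n

section Deterministic

variable {v a b c : ℕ → ℝ}

theorem compoundFactor_succ (a : ℕ → ℝ) (n : ℕ) :
    compoundFactor a (n + 1) = compoundFactor a n * (1 + a n) :=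
  prod_range_succ _ _

theorem one_le_compoundFactor (ha : ∀ k, 0 ≤ a k) (n : ℕ) : 1 ≤ compoundFactor a n :=
  one_le_prod fun k _ => le_add_of_nonneg_right (ha k)

theorem compoundFactor_pos (ha : ∀ k, 0 ≤ a k) (n : ℕ) : 0 < compoundFactor a n :=
  one_pos.trans_le (one_le_compoundFactor ha n)

theorem monotone_compoundFactor (ha : ∀ k, 0 ≤ a k) : Monotone (compoundFactor a) :=
  monotone_nat_of_le_succ fun n => by
    rw [compoundFactor_succ]
    exact le_mul_of_one_le_right (compoundFactor_pos ha n).le (le_add_of_nonneg_right (ha n))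

theorem compoundFactor_le_exp_tsum (ha : ∀ k, 0 ≤ a k) (ha_sum : Summable a) (n : ℕ) :
    compoundFactor a n ≤ Real.exp (∑' k, a k) :=
  calc compoundFactor a n ≤ ∏ k ∈ range n, Real.exp (a k) :=
        prod_le_prod (fun k _ => by linarith [ha k]) fun k _ => by
          linarith [Real.add_one_le_exp (a k)]
    _ = Real.exp (∑ k ∈ range n, a k) := (Real.exp_sum _ _).symm
    _ ≤ Real.exp (∑' k, a k) := Real.exp_le_exp.2 (ha_sum.sum_le_tsum _ fun k _ => ha k)

theorem exists_tendsto_compoundFactor (ha : ∀ k, 0 ≤ a k) (ha_sum : Summable a) :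
    ∃ P, Tendsto (compoundFactor a) atTop (𝓝 P) :=
  ⟨_, tendsto_atTop_ciSup (monotone_compoundFactor ha)
    ⟨_, Set.forall_mem_range.2 (compoundFactor_le_exp_tsum ha ha_sum)⟩⟩

theorem div_compoundFactor_nonneg (ha : ∀ k, 0 ≤ a k) (hb : ∀ k, 0 ≤ b k) (k n : ℕ) :
    0 ≤ b k / compoundFactor a n :=
  div_nonneg (hb k) (compoundFactor_pos ha n).le

theorem discountedSum_nonneg (ha : ∀ k, 0 ≤ a k) (hb : ∀ k, 0 ≤ b k) (n : ℕ) :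
    0 ≤ discountedSum a b n :=
  sum_nonneg fun k _ => div_compoundFactor_nonneg ha hb k (k + 1)

theorem monotone_discountedSum (ha : ∀ k, 0 ≤ a k) (hb : ∀ k, 0 ≤ b k) :
    Monotone (discountedSum a b) :=
  monotone_nat_of_le_succ fun n => by
    simp only [discountedSum, sum_range_succ]
    exact le_add_of_nonneg_right (div_compoundFactor_nonneg ha hb n (n + 1))

theorem discountedSum_le_tsum (ha : ∀ k, 0 ≤ a k) (hb : ∀ k, 0 ≤ b k) (hb_sum : Summable b)
    (n : ℕ) : discountedSum a b n ≤ ∑' k, b k :=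
  (sum_le_sum fun k _ => div_le_self (hb k) (one_le_compoundFactor ha (k + 1))).trans
    (hb_sum.sum_le_tsum _ fun k _ => hb k)

theorem summable_of_bddAbove_discountedSum (ha : ∀ k, 0 ≤ a k) (ha_sum : Summable a)
    (hb : ∀ k, 0 ≤ b k) (hbdd : BddAbove (Set.range (discountedSum a b))) : Summable b := by
  obtain ⟨K, hK⟩ := hbdd
  have hdisc : Summable fun k => b k / compoundFactor a (k + 1) :=
    summable_of_sum_range_le (fun k => div_compoundFactor_nonneg ha hb k (k + 1))
      fun n => hK ⟨n, rfl⟩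
  refine (hdisc.mul_right (Real.exp (∑' k, a k))).of_nonneg_of_le hb fun k => ?_
  calc b k = b k / compoundFactor a (k + 1) * compoundFactor a (k + 1) :=
        (div_mul_cancel₀ _ (compoundFactor_pos ha (k + 1)).ne').symm
    _ ≤ _ := mul_le_mul_of_nonneg_left (compoundFactor_le_exp_tsum ha ha_sum (k + 1))
        (div_compoundFactor_nonneg ha hb k (k + 1))

theorem neg_discountedSum_le_discountedPotential (hv : ∀ n, 0 ≤ v n) (ha : ∀ k, 0 ≤ a k)
    (hc : ∀ k, 0 ≤ c k) (n : ℕ) : -discountedSum a b n ≤ discountedPotential v a b c n := by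
  rw [discountedPotential]
  linarith [div_compoundFactor_nonneg ha hv n n, discountedSum_nonneg ha hc n]

theorem discountedPotential_eq_inv_mul_add (ha : ∀ k, 0 ≤ a k) (n : ℕ) :
    discountedPotential v a b c n = (compoundFactor a (n + 1))⁻¹ * (v n * (1 + a n) + b n - c n)
      + (discountedSum a c (n + 1) - discountedSum a b (n + 1)) := by
  have hA := (compoundFactor_pos ha n).ne'
  have ha1 : 1 + a n ≠ 0 := by linarith [ha n]
  simp only [discountedPotential, discountedSum, sum_range_succ, compoundFactor_succ]
  field_simp
  ring

theorem discountedPotential_succ (n : ℕ) :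
    discountedPotential v a b c (n + 1) = (compoundFactor a (n + 1))⁻¹ * v (n + 1)
      + (discountedSum a c (n + 1) - discountedSum a b (n + 1)) := by
  rw [discountedPotential, div_eq_inv_mul]
  ring

theorem exists_tendsto_and_summable_of_tendsto_discountedPotential (hv : ∀ n, 0 ≤ v n)
    (ha : ∀ k, 0 ≤ a k) (hb : ∀ k, 0 ≤ b k) (hc : ∀ k, 0 ≤ c k) (ha_sum : Summable a)
    (hb_sum : Summable b) (hu : ∃ l, Tendsto (discountedPotential v a b c) atTop (𝓝 l)) :
    (∃ l, Tendsto v atTop (𝓝 l)) ∧ Summable c := by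
  obtain ⟨l, hl⟩ := hu
  obtain ⟨K, hK⟩ := hl.bddAbove_range
  have hb_bdd : BddAbove (Set.range (discountedSum a b)) :=
    ⟨_, Set.forall_mem_range.2 (discountedSum_le_tsum ha hb hb_sum)⟩
  have hc_bdd : BddAbove (Set.range (discountedSum a c)) := by
    refine ⟨K + ∑' k, b k, Set.forall_mem_range.2 fun n => ?_⟩
    have hu_le : discountedPotential v a b c n ≤ K := hK ⟨n, rfl⟩
    rw [discountedPotential] at hu_le
    linarith [div_compoundFactor_nonneg ha hv n n, discountedSum_le_tsum ha hb hb_sum n]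
  obtain ⟨P, hP⟩ := exists_tendsto_compoundFactor ha ha_sum
  obtain ⟨Lb, hLb⟩ : ∃ L, Tendsto (discountedSum a b) atTop (𝓝 L) :=
    ⟨_, tendsto_atTop_ciSup (monotone_discountedSum ha hb) hb_bdd⟩
  obtain ⟨Lc, hLc⟩ : ∃ L, Tendsto (discountedSum a c) atTop (𝓝 L) :=
    ⟨_, tendsto_atTop_ciSup (monotone_discountedSum ha hc) hc_bdd⟩
  refine ⟨⟨(l - Lc + Lb) * P, ?_⟩, summable_of_bddAbove_discountedSum ha ha_sum hc hc_bdd⟩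
  have hvA : Tendsto (fun n => v n / compoundFactor a n) atTop (𝓝 (l - Lc + Lb)) :=
    ((hl.sub hLc).add hLb).congr fun n => by simp only [discountedPotential]; ring
  exact (hvA.mul hP).congr fun n => div_mul_cancel₀ _ (compoundFactor_pos ha n).ne'

end Deterministic

namespace MeasureTheory

variable {Ω : Type*} {m0 : MeasurableSpace Ω} {μ : Measure Ω}

theorem condExp_mul_add_le {m : MeasurableSpace Ω} (hm : m ≤ m0) [SigmaFinite (μ.trim hm)]
    {D X Y G : Ω → ℝ} {C : ℝ}
    (hD : StronglyMeasurable[m] D) (hD_nonneg : ∀ ω, 0 ≤ D ω) (hD_le : ∀ ω, D ω ≤ C)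
    (hX : Integrable X μ) (hG : StronglyMeasurable[m] G) (hG_int : Integrable G μ)
    (hXY : μ[X | m] ≤ᵐ[μ] Y) : μ[D * X + G | m] ≤ᵐ[μ] D * Y + G := by
  have hDX : Integrable (D * X) μ := hX.bdd_mul (hD.mono hm).aestronglyMeasurable
    (ae_of_all _ fun ω => (Real.norm_of_nonneg (hD_nonneg ω)).trans_le (hD_le ω))
  filter_upwards [condExp_add hDX hG_int m, condExp_mul_of_stronglyMeasurable_left hD hDX hX,
    hXY] with ω h_add h_mul hω
  rw [h_add, Pi.add_apply, h_mul, condExp_of_stronglyMeasurable hm hG hG_int]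
  simp only [Pi.add_apply, Pi.mul_apply]
  exact add_le_add_left (mul_le_mul_of_nonneg_left hω (hD_nonneg ω)) _

variable {ℱ : Filtration ℕ m0}

theorem Supermartingale.exists_ae_tendsto_of_nonneg [IsFiniteMeasure μ] {f : ℕ → Ω → ℝ}
    (hf : Supermartingale f ℱ μ) (hf_nonneg : ∀ n ω, 0 ≤ f n ω) :
    ∀ᵐ ω ∂μ, ∃ c, Tendsto (fun n => f n ω) atTop (𝓝 c) := by
  have hbdd : ∀ n, eLpNorm ((-f) n) 1 μ ≤ (∫ ω, f 0 ω ∂μ).toNNReal := by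
    intro n
    rw [Pi.neg_apply, eLpNorm_neg, eLpNorm_one_eq_lintegral_enorm,
      ← ofReal_integral_norm_eq_lintegral_enorm (hf.integrable n)]
    refine ENNReal.ofReal_le_ofReal ?_
    simp_rw [Real.norm_of_nonneg (hf_nonneg n _)]
    simpa using hf.setIntegral_le (Nat.zero_le n) MeasurableSet.univ
  filter_upwards [hf.neg.exists_ae_tendsto_of_bdd hbdd] with ω ⟨c, hc⟩
  exact ⟨-c, by simpa using hc.neg⟩

theorem exists_stoppedProcess_eq {ι β : Type*} [LinearOrder ι] [Nonempty ι]
    (u : ι → Ω → β) (τ : Ω → WithTop ι) (i : ι) (ω : Ω) :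
    ∃ j : ι, (j : WithTop ι) ≤ τ ω ∧ stoppedProcess u τ i ω = u j ω := by
  rcases le_total (i : WithTop ι) (τ ω) with h | h
  · exact ⟨i, h, stoppedProcess_eq_of_le h⟩
  · obtain ⟨j, hj⟩ := WithTop.ne_top_iff_exists.1 (ne_top_of_le_ne_top WithTop.coe_ne_top h)
    refine ⟨j, hj.le, ?_⟩
    rw [stoppedProcess_eq_of_ge h, ← hj]
    rfl

theorem neg_le_stoppedProcess_hittingAfter {u B : ℕ → Ω → ℝ} (hB0 : B 0 = 0)
    (hle : ∀ n ω, -B n ω ≤ u n ω) {r : ℝ} (hr : 0 ≤ r) (n : ℕ) (ω : Ω) :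
    -r ≤ stoppedProcess u (hittingAfter (fun n => B (n + 1)) (Set.Ioi r) 0) n ω := by
  obtain ⟨k, hk, hk_eq⟩ := exists_stoppedProcess_eq u _ n ω
  have hBk : B k ω ≤ r := by
    cases k with
    | zero => simpa [hB0] using hr
    | succ j =>
      have hj : (j : ℕ∞) < hittingAfter (fun n => B (n + 1)) (Set.Ioi r) 0 ω :=
        (WithTop.coe_lt_coe.2 j.lt_succ_self).trans_le hk
      simpa using notMem_of_lt_hittingAfter hj (Nat.zero_le j)
  rw [hk_eq]
  linarith [hle k ω]

theorem Supermartingale.exists_ae_tendsto_of_neg_le_predictable [IsFiniteMeasure μ]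
    {u B : ℕ → Ω → ℝ} (hu : Supermartingale u ℱ μ) (hB : Adapted ℱ fun n => B (n + 1))
    (hB0 : B 0 = 0) (hle : ∀ n ω, -B n ω ≤ u n ω) :
    ∀ᵐ ω ∂μ, BddAbove (Set.range fun n => B n ω) →
      ∃ c, Tendsto (fun n => u n ω) atTop (𝓝 c) := by
  set τ : ℕ → Ω → ℕ∞ := fun M => hittingAfter (fun n => B (n + 1)) (Set.Ioi (M : ℝ)) 0
  have hconv : ∀ M : ℕ, ∀ᵐ ω ∂μ,
      ∃ c, Tendsto (fun n => stoppedProcess u (τ M) n ω) atTop (𝓝 c) := by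
    intro M
    have hstop : Supermartingale (stoppedProcess u (τ M)) ℱ μ := by
      simpa using (hu.neg.stoppedProcess (hB.isStoppingTime_hittingAfter measurableSet_Ioi)).neg
    have hshift := hstop.add_martingale (martingale_const ℱ μ (M : ℝ))
    have hshift_nonneg : ∀ n ω, 0 ≤ stoppedProcess u (τ M) n ω + M := fun n ω =>
      neg_le_iff_add_nonneg.1 (neg_le_stoppedProcess_hittingAfter hB0 hle M.cast_nonneg n ω)
    filter_upwards [hshift.exists_ae_tendsto_of_nonneg hshift_nonneg] with ω ⟨c, hc⟩
    exact ⟨c - M, by simpa using hc.sub_const (M : ℝ)⟩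
  filter_upwards [ae_all_iff.2 hconv] with ω hω ⟨R, hR⟩
  obtain ⟨M, hM⟩ := exists_nat_ge R
  have hτ : τ M ω = ⊤ := hittingAfter_eq_top_iff.2 fun j _ =>
    Set.notMem_Ioi.2 ((hR ⟨j + 1, rfl⟩).trans hM)
  obtain ⟨c, hc⟩ := hω M
  exact ⟨c, hc.congr fun n => stoppedProcess_eq_of_le (hτ ▸ le_top)⟩

variable {v a b c : ℕ → Ω → ℝ}

theorem measurable_compoundFactor (ha : Adapted ℱ a) {m n : ℕ} (hmn : m ≤ n + 1) :
    Measurable[ℱ n] fun ω => compoundFactor (a · ω) m :=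
  Finset.measurable_prod _ fun k hk =>
    measurable_const.add ((ha k).mono (ℱ.mono (by linarith [mem_range.1 hk])) le_rfl)

theorem measurable_discountedSum (ha : Adapted ℱ a) (hb : Adapted ℱ b) {m n : ℕ}
    (hmn : m ≤ n + 1) : Measurable[ℱ n] fun ω => discountedSum (a · ω) (b · ω) m :=
  Finset.measurable_sum _ fun k hk => by
    have hk : k < n + 1 := (mem_range.1 hk).trans_le hmn
    exact ((hb k).mono (ℱ.mono (Nat.le_of_lt_succ hk)) le_rfl).div
      (measurable_compoundFactor ha hk)

theorem integrable_div_compoundFactor (ha : ∀ k, Measurable (a k))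
    (ha_nonneg : ∀ k ω, 0 ≤ a k ω) {f : Ω → ℝ} (hf : Integrable f μ) (m : ℕ) :
    Integrable (fun ω => f ω / compoundFactor (a · ω) m) μ := by
  simp_rw [div_eq_inv_mul]
  refine hf.bdd_mul (c := 1) ?_ (ae_of_all _ fun ω => ?_)
  · exact (Finset.measurable_prod _ fun k _ =>
      measurable_const.add (ha k)).inv.aestronglyMeasurable
  · rw [norm_inv, Real.norm_of_nonneg (compoundFactor_pos (ha_nonneg · ω) m).le]
    exact inv_le_one_of_one_le₀ (one_le_compoundFactor (ha_nonneg · ω) m)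

theorem integrable_discountedSum (ha : ∀ k, Measurable (a k))
    (ha_nonneg : ∀ k ω, 0 ≤ a k ω) (hb : ∀ k, Integrable (b k) μ) (m : ℕ) :
    Integrable (fun ω => discountedSum (a · ω) (b · ω) m) μ :=
  integrable_finsetSum _ fun k _ => integrable_div_compoundFactor ha ha_nonneg (hb k) (k + 1)

theorem supermartingale_discountedPotential [IsFiniteMeasure μ] (hv : Adapted ℱ v)
    (ha : Adapted ℱ a) (hb : Adapted ℱ b) (hc : Adapted ℱ c)
    (ha_nonneg : ∀ n ω, 0 ≤ a n ω) (hv_int : ∀ n, Integrable (v n) μ)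
    (hb_int : ∀ n, Integrable (b n) μ) (hc_int : ∀ n, Integrable (c n) μ)
    (hrec : ∀ n, μ[v (n + 1) | ℱ n] ≤ᵐ[μ]
      fun ω => v n ω * (1 + a n ω) + b n ω - c n ω) :
    Supermartingale (fun n ω => discountedPotential (v · ω) (a · ω) (b · ω) (c · ω) n)
      ℱ μ := by
  have ha_meas : ∀ k, Measurable (a k) := fun k => (ha k).mono (ℱ.le k) le_rfl
  refine supermartingale_nat (fun n => ?_) (fun n => ?_) fun n => ?_
  · exact ((((hv n).div (measurable_compoundFactor ha n.le_succ)).add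
      (measurable_discountedSum ha hc n.le_succ)).sub
      (measurable_discountedSum ha hb n.le_succ)).stronglyMeasurable
  · exact ((integrable_div_compoundFactor ha_meas ha_nonneg (hv_int n) n).add
      (integrable_discountedSum ha_meas ha_nonneg hc_int n)).sub
      (integrable_discountedSum ha_meas ha_nonneg hb_int n)
  · set D : Ω → ℝ := fun ω => (compoundFactor (a · ω) (n + 1))⁻¹
    set G : Ω → ℝ := fun ω =>
      discountedSum (a · ω) (c · ω) (n + 1) - discountedSum (a · ω) (b · ω) (n + 1)
    have hsucc : (fun ω => discountedPotential (v · ω) (a · ω) (b · ω) (c · ω) (n + 1))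
        = D * v (n + 1) + G := funext fun ω => discountedPotential_succ n
    have hcurr : (fun ω => discountedPotential (v · ω) (a · ω) (b · ω) (c · ω) n)
        = D * (fun ω => v n ω * (1 + a n ω) + b n ω - c n ω) + G :=
      funext fun ω => discountedPotential_eq_inv_mul_add (ha_nonneg · ω) n
    rw [hsucc, hcurr]
    exact condExp_mul_add_le (ℱ.le n)
      (measurable_compoundFactor ha le_rfl).inv.stronglyMeasurable
      (fun ω => inv_nonneg.2 (compoundFactor_pos (ha_nonneg · ω) _).le)
      (fun ω => inv_le_one_of_one_le₀ (one_le_compoundFactor (ha_nonneg · ω) _)) (hv_int _)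
      ((measurable_discountedSum ha hc le_rfl).sub
        (measurable_discountedSum ha hb le_rfl)).stronglyMeasurable
      ((integrable_discountedSum ha_meas ha_nonneg hc_int _).sub
        (integrable_discountedSum ha_meas ha_nonneg hb_int _))
      (hrec n)

end MeasureTheory

open MeasureTheory

theorem robbins_siegmund_general
    {Ω : Type*} {m0 : MeasurableSpace Ω} {μ : Measure Ω} [IsProbabilityMeasure μ]
    (ℱ : Filtration ℕ m0)
    (v a b c : ℕ → Ω → ℝ)
    (hv_adapted : Adapted ℱ v) (ha_adapted : Adapted ℱ a)
    (hb_adapted : Adapted ℱ b) (hc_adapted : Adapted ℱ c)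
    (hv_nonneg : ∀ n ω, 0 ≤ v n ω) (ha_nonneg : ∀ n ω, 0 ≤ a n ω)
    (hb_nonneg : ∀ n ω, 0 ≤ b n ω) (hc_nonneg : ∀ n ω, 0 ≤ c n ω)
    (hv_int : ∀ n, Integrable (v n) μ)
    (hb_int : ∀ n, Integrable (b n) μ) (hc_int : ∀ n, Integrable (c n) μ)
    (hrec : ∀ n, μ[v (n + 1) | ℱ n] ≤ᵐ[μ] fun ω => v n ω * (1 + a n ω) + b n ω - c n ω)
    (ha_sum : ∀ᵐ ω ∂μ, Summable fun n => a n ω)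
    (hb_sum : ∀ᵐ ω ∂μ, Summable fun n => b n ω) :
    ∀ᵐ ω ∂μ, (∃ l : ℝ, Tendsto (fun n => v n ω) atTop (nhds l)) ∧
      Summable fun n => c n ω := by
  have hu := supermartingale_discountedPotential hv_adapted ha_adapted hb_adapted hc_adapted
    ha_nonneg hv_int hb_int hc_int hrec
  have hconv := hu.exists_ae_tendsto_of_neg_le_predictable
    (B := fun n ω => discountedSum (a · ω) (b · ω) n)
    (fun n => measurable_discountedSum ha_adapted hb_adapted le_rfl) (funext fun ω => rfl)
    fun n ω => neg_discountedSum_le_discountedPotential (hv_nonneg · ω) (ha_nonneg · ω)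
      (hc_nonneg · ω) n
  filter_upwards [hconv, ha_sum, hb_sum] with ω hω haω hbω
  exact exists_tendsto_and_summable_of_tendsto_discountedPotential (hv_nonneg · ω)
    (ha_nonneg · ω) (hb_nonneg · ω) (hc_nonneg · ω) haω hbω
    (hω ⟨_, Set.forall_mem_range.2
      (discountedSum_le_tsum (ha_nonneg · ω) (hb_nonneg · ω) hbω)⟩)

/-- **Robbins–Siegmund lemma.** If `v, a, b, c` are nonnegative random variables adapted to a
filtration `ℱ` with `E[v (n+1) | ℱ n] ≤ v n * (1 + a n) + b n - c n` a.s. for every `n`, and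
`∑ a n < ∞`, `∑ b n < ∞` a.s., then a.s. `v n` converges to a finite limit and `∑ c n < ∞`. -/
theorem robbins_siegmund
    {Ω : Type*} {m0 : MeasurableSpace Ω} {μ : Measure Ω} [IsProbabilityMeasure μ]
    (ℱ : Filtration ℕ m0)
    (v a b c : ℕ → Ω → ℝ)
    (hv_adapted : Adapted ℱ v) (ha_adapted : Adapted ℱ a)
    (hb_adapted : Adapted ℱ b) (hc_adapted : Adapted ℱ c)
    (hv_nonneg : ∀ n ω, 0 ≤ v n ω) (ha_nonneg : ∀ n ω, 0 ≤ a n ω)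
    (hb_nonneg : ∀ n ω, 0 ≤ b n ω) (hc_nonneg : ∀ n ω, 0 ≤ c n ω)
    (hv_int : ∀ n, Integrable (v n) μ) (ha_int : ∀ n, Integrable (a n) μ)
    (hb_int : ∀ n, Integrable (b n) μ) (hc_int : ∀ n, Integrable (c n) μ)
    (hrec : ∀ n, μ[v (n + 1) | ℱ n] ≤ᵐ[μ] fun ω => v n ω * (1 + a n ω) + b n ω - c n ω)
    (ha_sum : ∀ᵐ ω ∂μ, Summable fun n => a n ω)
    (hb_sum : ∀ᵐ ω ∂μ, Summable fun n => b n ω) :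
    ∀ᵐ ω ∂μ, (∃ l : ℝ, Tendsto (fun n => v n ω) atTop (nhds l)) ∧
      Summable fun n => c n ω :=
  robbins_siegmund_general ℱ v a b c hv_adapted ha_adapted hb_adapted hc_adapted hv_nonneg ha_nonneg
    hb_nonneg hc_nonneg hv_int hb_int hc_int hrec ha_sum hb_sum
end

section
/- Let {τ_n} be a nonnegative deterministic real sequence and {β_n} a nonnegative real-valued random sequence adapted to a filtration {F_n}. Assume Σ_{n=1}^∞ τ_n = ∞, E[Σ_{n=1}^∞ τ_n β_n] < ∞, and that there exists γ > 0 such that β_n − E[β_{n+1} | F_n] ≤ γ τ_n almost surely for all n. Then β_n converges to 0 almost surely. -/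
/-!
Let `G = ∑ τ_n β_n`, which is integrable. By Lévy's upward theorem
`R_n := E[G | F_n] - ∑_{m<n} τ_m β_m`, the conditional expectation of the tail of the series,
tends to `0` almost surely.

The bias condition says that `β_n + γ ∑_{k<n} τ_k` is a submartingale, so
`β_n ≤ E[β_m | F_n] + γ ∑_{n≤k<m} τ_k` for `m ≥ n`. Multiplying by `τ_m` and summing over a window
`n ≤ m ≤ N` whose `τ`-mass first reaches `ε` (it exists since `∑ τ_n = ∞`) gives
`ε (β_n - γ ε) ≤ R_n`, because the conditional expectations of the summed terms are dominated by
`R_n`. Hence `β_n ≤ R_n / ε + γ ε`, so `limsup β_n ≤ γ ε` for every `ε > 0`.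
-/

open MeasureTheory Filter Finset Topology

lemma exists_le_le_succ_of_tendsto_atTop {s : ℕ → ℝ} {ε : ℝ} (h0 : s 0 ≤ ε)
    (hs : Tendsto s atTop atTop) : ∃ N, s N ≤ ε ∧ ε ≤ s (N + 1) := by
  classical
  have hex : ∃ N, ε < s N := (hs.eventually_gt_atTop ε).exists
  obtain ⟨N, hN⟩ : ∃ N, Nat.find hex = N + 1 :=
    Nat.exists_eq_succ_of_ne_zero fun h => (Nat.find_spec hex).not_ge (h ▸ h0)
  exact ⟨N, not_lt.1 (Nat.find_min hex (by omega)), hN ▸ (Nat.find_spec hex).le⟩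

lemma tendsto_sum_Ico_atTop_of_not_summable {τ : ℕ → ℝ} (hτ_nonneg : ∀ n, 0 ≤ τ n)
    (hτ_div : ¬ Summable τ) (n : ℕ) :
    Tendsto (fun N => ∑ k ∈ Ico n N, τ k) atTop atTop := by
  have h := tendsto_atTop_add_const_right _ (-∑ k ∈ range n, τ k)
    ((not_summable_iff_tendsto_nat_atTop_of_nonneg hτ_nonneg).1 hτ_div)
  refine h.congr' ?_
  filter_upwards [eventually_ge_atTop n] with N hN
  rw [sum_Ico_eq_sub _ hN, sub_eq_add_neg]

lemma le_div_add_mul_of_sum_Ico_mul_sub_le {τ : ℕ → ℝ} (hτ_nonneg : ∀ n, 0 ≤ τ n)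
    (hτ_div : ¬ Summable τ) {b R γ ε : ℝ} (hγ : 0 ≤ γ) (hε : 0 < ε) {n : ℕ}
    (h : ∀ N, ∑ m ∈ Ico n N, τ m * (b - γ * ∑ k ∈ Ico n m, τ k) ≤ R) :
    b ≤ R / ε + γ * ε := by
  obtain ⟨N, hN, hT⟩ := exists_le_le_succ_of_tendsto_atTop (by simpa using hε.le)
    (tendsto_sum_Ico_atTop_of_not_summable hτ_nonneg hτ_div n)
  have hR : 0 ≤ R := by simpa using h n
  have hTR : (∑ m ∈ Ico n (N + 1), τ m) * (b - γ * ε) ≤ R := by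
    refine le_trans ?_ (h (N + 1))
    rw [sum_mul]
    refine sum_le_sum fun m hm => mul_le_mul_of_nonneg_left ?_ (hτ_nonneg m)
    have hmN : m ≤ N := Nat.lt_succ_iff.1 (mem_Ico.1 hm).2
    have hprefix : ∑ k ∈ Ico n m, τ k ≤ ε := le_trans
      (sum_le_sum_of_subset_of_nonneg (Ico_subset_Ico_right hmN) fun k _ _ => hτ_nonneg k) hN
    nlinarith
  rw [← sub_le_iff_le_add, le_div_iff₀ hε]
  rcases le_or_gt (b - γ * ε) 0 with hb | hb <;> nlinarith

lemma tendsto_zero_of_le_div_add_mul {b R ε : ℕ → ℝ} {γ : ℝ} (hb : ∀ n, 0 ≤ b n)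
    (hR : Tendsto R atTop (𝓝 0)) (hε : Tendsto ε atTop (𝓝 0))
    (h : ∀ k n, b n ≤ R n / ε k + γ * ε k) : Tendsto b atTop (𝓝 0) := by
  refine tendsto_order.2 ⟨fun a ha => Eventually.of_forall fun n => ha.trans_le (hb n),
    fun a ha => ?_⟩
  have hγε : Tendsto (fun k => γ * ε k) atTop (𝓝 0) := by simpa using hε.const_mul γ
  obtain ⟨k, hk⟩ := (hγε.eventually_lt_const (half_pos ha)).exists
  have hRε : Tendsto (fun n => R n / ε k) atTop (𝓝 0) := by simpa using hR.div_const (ε k)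
  filter_upwards [hRε.eventually_lt_const (half_pos ha)] with n hn
  linarith [h k n]

lemma hasSum_toReal_tsum_ofReal {ι : Type*} {f : ι → ℝ} (hf : ∀ i, 0 ≤ f i)
    (h : ∑' i, ENNReal.ofReal (f i) ≠ ⊤) : HasSum f (∑' i, ENNReal.ofReal (f i)).toReal := by
  rw [ENNReal.tsum_toReal_eq fun _ => ENNReal.ofReal_ne_top]
  simpa only [ENNReal.toReal_ofReal, hf] using ENNReal.hasSum_toReal h

section Conditional

variable {Ω : Type*} {m0 : MeasurableSpace Ω} {μ : Measure Ω} {ℱ : Filtration ℕ m0}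

lemma condExp_add_const_ae_eq [IsFiniteMeasure μ] {f : Ω → ℝ} (hf : Integrable f μ) (c : ℝ)
    (n : ℕ) : μ[fun ω => f ω + c|ℱ n] =ᵐ[μ] fun ω => μ[f|ℱ n] ω + c := by
  filter_upwards [condExp_add hf (integrable_const c) (ℱ n)] with ω hω
  rw [show (fun ω => f ω + c) = f + fun _ => c from rfl, hω, Pi.add_apply,
    condExp_const (ℱ.le n)]

lemma ae_le_condExp_add_sum_Ico [IsFiniteMeasure μ] {β : ℕ → Ω → ℝ} {c : ℕ → ℝ}
    (hβ_adapted : Adapted ℱ β) (hβ_int : ∀ n, Integrable (β n) μ)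
    (hbias : ∀ n, ∀ᵐ ω ∂μ, β n ω - μ[β (n + 1)|ℱ n] ω ≤ c n) {n m : ℕ} (hnm : n ≤ m) :
    ∀ᵐ ω ∂μ, β n ω ≤ μ[β m|ℱ n] ω + ∑ k ∈ Ico n m, c k := by
  set Y : ℕ → Ω → ℝ := fun n ω => β n ω + ∑ k ∈ range n, c k
  have hY_int : ∀ n, Integrable (Y n) μ := fun n => (hβ_int n).add (integrable_const _)
  have hY : Submartingale Y ℱ μ := by
    refine submartingale_nat (fun n => ((hβ_adapted n).add_const _).stronglyMeasurable)
      hY_int fun n => ?_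
    filter_upwards [hbias n,
      condExp_add_const_ae_eq (ℱ := ℱ) (hβ_int (n + 1)) (∑ k ∈ range (n + 1), c k) n]
      with ω hbias_n hω
    simp only [Y]
    rw [hω, sum_range_succ]
    linarith
  filter_upwards [hY.ae_le_condExp hnm,
    condExp_add_const_ae_eq (ℱ := ℱ) (hβ_int m) (∑ k ∈ range m, c k) n]
    with ω hYω hω
  simp only [Y, hω] at hYω
  linarith [sum_range_add_sum_Ico c hnm]

lemma tendsto_condExp_sub_sum_range [IsFiniteMeasure μ] {f : ℕ → Ω → ℝ} {g : Ω → ℝ}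
    (hg_int : Integrable g μ) (hg_meas : StronglyMeasurable[⨆ n, ℱ n] g)
    (hg : ∀ᵐ ω ∂μ, HasSum (f · ω) (g ω)) :
    ∀ᵐ ω ∂μ, Tendsto (fun n => μ[g|ℱ n] ω - ∑ m ∈ range n, f m ω) atTop (𝓝 0) := by
  filter_upwards [hg_int.tendsto_ae_condExp hg_meas, hg] with ω hcondExp hsum
  simpa using hcondExp.sub hsum.tendsto_sum_nat

lemma sum_Ico_condExp_le_condExp_sub_sum_range [IsFiniteMeasure μ] {f : ℕ → Ω → ℝ}
    {g : Ω → ℝ} (hf_nonneg : ∀ n ω, 0 ≤ f n ω) (hf_adapted : Adapted ℱ f)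
    (hf_int : ∀ n, Integrable (f n) μ) (hg_int : Integrable g μ)
    (hg : ∀ᵐ ω ∂μ, HasSum (f · ω) (g ω)) (n N : ℕ) :
    ∀ᵐ ω ∂μ, ∑ m ∈ Ico n N, μ[f m|ℱ n] ω ≤ μ[g|ℱ n] ω - ∑ m ∈ range n, f m ω := by
  set P : Ω → ℝ := ∑ m ∈ range n, f m
  have hP_int : Integrable P μ := integrable_finsetSum' _ fun m _ => hf_int m
  have hP_meas : StronglyMeasurable[ℱ n] P := Finset.stronglyMeasurable_sum _ fun m hm =>
    ((hf_adapted m).mono (ℱ.mono (mem_range.1 hm).le) le_rfl).stronglyMeasurable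
  have hle : ∑ m ∈ Ico n N, f m ≤ᵐ[μ] g - P := by
    filter_upwards [hg] with ω hω
    simp only [Finset.sum_apply, Pi.sub_apply, P, le_sub_iff_add_le']
    have hdisj : Disjoint (range n) (Ico n N) := disjoint_left.2 fun k hk hk' => by
      simp only [mem_range, mem_Ico] at hk hk'; omega
    rw [← sum_union hdisj]
    exact sum_le_hasSum _ (fun k _ => hf_nonneg k ω) hω
  filter_upwards [condExp_finsetSum (fun m _ => hf_int m) (ℱ n) (μ := μ),
    condExp_mono (m := ℱ n) (integrable_finsetSum' _ fun m _ => hf_int m)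
      (hg_int.sub hP_int) hle, condExp_sub hg_int hP_int (ℱ n)] with ω hsum hmono hsub
  rw [← Finset.sum_apply, ← hsum]
  refine hmono.trans_eq ?_
  rw [hsub, Pi.sub_apply, condExp_of_stronglyMeasurable (ℱ.le n) hP_meas hP_int]
  simp only [P, Finset.sum_apply]

lemma ae_sum_Ico_mul_sub_le_condExp_sub_sum_range [IsFiniteMeasure μ] {τ : ℕ → ℝ}
    (hτ_nonneg : ∀ n, 0 ≤ τ n) {β : ℕ → Ω → ℝ} (hβ_nonneg : ∀ n ω, 0 ≤ β n ω)
    (hβ_adapted : Adapted ℱ β) (hβ_int : ∀ n, Integrable (β n) μ) {γ : ℝ}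
    (hbias : ∀ n, ∀ᵐ ω ∂μ, β n ω - μ[β (n + 1)|ℱ n] ω ≤ γ * τ n) {g : Ω → ℝ}
    (hg_int : Integrable g μ) (hg : ∀ᵐ ω ∂μ, HasSum (fun n => τ n * β n ω) (g ω)) (n N : ℕ) :
    ∀ᵐ ω ∂μ, ∑ m ∈ Ico n N, τ m * (β n ω - γ * ∑ k ∈ Ico n m, τ k) ≤
      μ[g|ℱ n] ω - ∑ m ∈ range n, τ m * β m ω := by
  have hτβ_condExp : ∀ m, μ[fun ω => τ m * β m ω|ℱ n] =ᵐ[μ] fun ω => τ m * μ[β m|ℱ n] ω :=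
    fun m => condExp_smul (τ m) (β m) (ℱ n)
  filter_upwards [ae_all_iff.2 hτβ_condExp,
    (ae_ball_iff (Ico n N).countable_toSet).2 fun m hm =>
      ae_le_condExp_add_sum_Ico hβ_adapted hβ_int hbias (mem_Ico.1 hm).1,
    sum_Ico_condExp_le_condExp_sub_sum_range (fun n ω => mul_nonneg (hτ_nonneg n) (hβ_nonneg n ω))
      (fun n => (hβ_adapted n).const_mul (τ n)) (fun n => (hβ_int n).const_mul (τ n))
      hg_int hg n N]
    with ω hτβ_eq hβ_le htail
  calc ∑ m ∈ Ico n N, τ m * (β n ω - γ * ∑ k ∈ Ico n m, τ k)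
      ≤ ∑ m ∈ Ico n N, τ m * μ[β m|ℱ n] ω := sum_le_sum fun m hm =>
        mul_le_mul_of_nonneg_left (by linarith [mul_sum (Ico n m) τ γ ▸ hβ_le m hm])
          (hτ_nonneg m)
    _ = ∑ m ∈ Ico n N, μ[fun ω => τ m * β m ω|ℱ n] ω :=
        sum_congr rfl fun m _ => (hτβ_eq m).symm
    _ ≤ μ[g|ℱ n] ω - ∑ m ∈ range n, τ m * β m ω := htail

lemma measurable_tsum_ofReal {m : MeasurableSpace Ω} {f : ℕ → Ω → ℝ}
    (hf : ∀ n, Measurable[m] (f n)) : Measurable[m] fun ω => ∑' n, ENNReal.ofReal (f n ω) :=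
  Measurable.tsum fun n => (hf n).ennreal_ofReal

lemma ae_hasSum_toReal_tsum_ofReal {f : ℕ → Ω → ℝ} (hf_nonneg : ∀ n ω, 0 ≤ f n ω)
    (hf_meas : ∀ n, Measurable (f n)) (h : ∫⁻ ω, ∑' n, ENNReal.ofReal (f n ω) ∂μ ≠ ⊤) :
    ∀ᵐ ω ∂μ, HasSum (f · ω) (∑' n, ENNReal.ofReal (f n ω)).toReal := by
  filter_upwards [ae_lt_top (measurable_tsum_ofReal hf_meas) h] with ω hω
  exact hasSum_toReal_tsum_ofReal (hf_nonneg · ω) hω.ne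

end Conditional

/-- Let `τ` be a nonnegative deterministic sequence with `∑ τ n = ∞` and `β` a nonnegative
random sequence adapted to a filtration `ℱ` with `E[∑' n, τ n * β n] < ∞`. If there is `γ > 0`
with `β n - E[β (n+1) | ℱ n] ≤ γ * τ n` a.s. for all `n`, then `β n → 0` almost surely. -/
theorem tendsto_zero_of_expected_weighted_sum_lt_top
    {Ω : Type*} {m0 : MeasurableSpace Ω} {μ : Measure Ω} [IsProbabilityMeasure μ]
    (ℱ : Filtration ℕ m0)
    (τ : ℕ → ℝ) (hτ_nonneg : ∀ n, 0 ≤ τ n) (hτ_div : ¬ Summable τ)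
    (β : ℕ → Ω → ℝ) (hβ_nonneg : ∀ n ω, 0 ≤ β n ω) (hβ_adapted : Adapted ℱ β)
    (hβ_int : ∀ n, Integrable (β n) μ)
    (hE : ∫⁻ ω, ∑' n, ENNReal.ofReal (τ n * β n ω) ∂μ < ⊤)
    (γ : ℝ) (hγ : 0 < γ)
    (hbias : ∀ n, ∀ᵐ ω ∂μ, β n ω - (μ[β (n + 1) | ℱ n]) ω ≤ γ * τ n) :
    ∀ᵐ ω ∂μ, Tendsto (fun n => β n ω) atTop (nhds 0) := by
  set g : Ω → ℝ := fun ω => (∑' n, ENNReal.ofReal (τ n * β n ω)).toReal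
  have hτβ_adapted : Adapted ℱ fun n ω => τ n * β n ω := fun n => (hβ_adapted n).const_mul (τ n)
  have hτβ_meas : ∀ n, Measurable fun ω => τ n * β n ω :=
    fun n => (hτβ_adapted n).mono (ℱ.le n) le_rfl
  have hg_int : Integrable g μ := integrable_toReal_of_lintegral_ne_top
    (measurable_tsum_ofReal hτβ_meas).aemeasurable hE.ne
  have hg : ∀ᵐ ω ∂μ, HasSum (fun n => τ n * β n ω) (g ω) := ae_hasSum_toReal_tsum_ofReal
    (fun n ω => mul_nonneg (hτ_nonneg n) (hβ_nonneg n ω)) hτβ_meas hE.ne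
  have hg_meas : StronglyMeasurable[⨆ n, ℱ n] g := (measurable_tsum_ofReal fun n =>
    (hτβ_adapted n).mono (le_iSup (fun n => (ℱ n : MeasurableSpace Ω)) n) le_rfl
    ).ennreal_toReal.stronglyMeasurable
  set R : ℕ → Ω → ℝ := fun n ω => μ[g|ℱ n] ω - ∑ m ∈ range n, τ m * β m ω
  have hR : ∀ᵐ ω ∂μ, Tendsto (R · ω) atTop (𝓝 0) :=
    tendsto_condExp_sub_sum_range hg_int hg_meas hg
  have hbound : ∀ (k : ℕ) n, ∀ᵐ ω ∂μ,
      β n ω ≤ R n ω / (1 / (k + 1 : ℝ)) + γ * (1 / (k + 1 : ℝ)) := fun k n =>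
    (ae_all_iff.2 (ae_sum_Ico_mul_sub_le_condExp_sub_sum_range hτ_nonneg hβ_nonneg hβ_adapted
      hβ_int hbias hg_int hg n)).mono fun ω h =>
        le_div_add_mul_of_sum_Ico_mul_sub_le hτ_nonneg hτ_div hγ.le Nat.one_div_pos_of_nat h
  filter_upwards [hR, ae_all_iff.2 fun k => ae_all_iff.2 (hbound k)] with ω hRω hω
  exact tendsto_zero_of_le_div_add_mul (hβ_nonneg · ω) hRω
    tendsto_one_div_add_atTop_nhds_zero_nat hω
end

section
/- Let H be a real Hilbert space, C ⊆ H a nonempty closed convex set, and π_C : H → C the metric projection onto C. Let j : H → ℝ be convex and Fréchet differentiable on an open neighborhood of C. On a probability space with filtration {F_n}, let {u_n} ⊂ C, {g_n} ⊂ H be random sequences with u_{n+1} = π_C(u_n − τ_n g_n) for deterministic step sizes τ_n ≥ 0, where g_n = ∇j(u_n) + w_n + r_n with E[w_n | F_n] = 0, u_n and r_n being F_n-measurable, and E[‖g_n‖² | F_n] ≤ M₁ + M₂‖u_n‖² almost surely for constants M₁, M₂ > 0. Then for every u ∈ C, setting M₃ := M₁ + 2M₂‖u‖² and M₄ := 2M₂,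 one has almost surely E[‖u_{n+1} − u‖² | F_n] ≤ ‖u_n − u‖²(1 + 2τ_n‖r_n‖ + τ_n² M₄) − 2τ_n (j(u_n) − j(u)) + 2τ_n‖r_n‖ + τ_n² M₃. -/
/-!
Projecting onto a convex set does not increase the distance to points of the set, so expanding
the square gives `‖u_{n+1} - u‖² ≤ ‖u_n - u‖² - 2τ_n ⟪u_n - u, g_n⟫ + τ_n² ‖g_n‖²`. Convexity
bounds `⟪u_n - u, ∇j(u_n) + r_n⟫` below by `j(u_n) - j(u) - ‖r_n‖ ‖u_n - u‖`, and the noise term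
`⟪u_n - u, w_n⟫` has vanishing conditional expectation. Neither `j(u_n)` nor `⟪u_n - u, w_n⟫` need
be integrable, so this last step is done on the `ℱ n`-measurable sets where `u_n - u` and the
lower bound are bounded, which exhaust `Ω`. The constants come from
`‖u_n‖² ≤ 2 ‖u_n - u‖² + 2 ‖u‖²` and `‖u_n - u‖ ≤ ‖u_n - u‖² + 1`.
-/

open MeasureTheory Filter
open scoped InnerProductSpace

theorem ConvexOn.le_sub_of_hasFDerivAt {E : Type*} [NormedAddCommGroup E] [NormedSpace ℝ E]
    {s : Set E} {f : E → ℝ} {f' : E →L[ℝ] ℝ} {x y : E} (hf : ConvexOn ℝ s f) (hx : x ∈ s)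
    (hy : y ∈ s) (hf' : HasFDerivAt f f' x) : f' (y - x) ≤ f y - f x := by
  have hφ := hf.comp_affineMap (AffineMap.lineMap (k := ℝ) x y)
  have hd : HasDerivAt (f ∘ AffineMap.lineMap (k := ℝ) x y) (f' (y - x)) 0 := by
    rw [← AffineMap.lineMap_apply_zero x y (k := ℝ)] at hf'
    simpa using hf'.comp_hasDerivAt (0 : ℝ) AffineMap.hasDerivAt_lineMap
  simpa [slope] using hφ.le_slope_of_hasDerivAt (by simpa) (by simpa) zero_lt_one hd

theorem MeasureTheory.StronglyMeasurable.comp_of_continuousAt {Ω α β : Type*}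
    {m : MeasurableSpace Ω} [TopologicalSpace α] [TopologicalSpace β] {f : Ω → α} {g : α → β}
    (hf : StronglyMeasurable[m] f) (hg : ∀ ω, ContinuousAt g (f ω)) :
    StronglyMeasurable[m] (g ∘ f) :=
  ⟨fun k => (hf.approx k).map g, fun ω => (hg ω).tendsto.comp (hf.tendsto_approx ω)⟩

theorem condExp_le_sub_smul_add_smul {Ω : Type*} {m m0 : MeasurableSpace Ω} {μ : Measure Ω}
    (hm : m ≤ m0) [SigmaFinite (μ.trim hm)] {Y a Q G : Ω → ℝ} (s t : ℝ)
    (ha : StronglyMeasurable[m] a) (hY : Integrable Y μ) (ha_int : Integrable a μ)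
    (hQ : Integrable Q μ) (hG : Integrable G μ) (hle : ∀ ω, Y ω ≤ a ω - s * Q ω + t * G ω) :
    μ[Y|m] ≤ᵐ[μ] a - s • μ[Q|m] + t • μ[G|m] := by
  have hrhs : Integrable (a - s • Q + t • G) μ := (ha_int.sub (hQ.smul s)).add (hG.smul t)
  filter_upwards [condExp_mono (m := m) hY hrhs (ae_of_all _ hle),
    condExp_add (ha_int.sub (hQ.smul s)) (hG.smul t) m, condExp_sub ha_int (hQ.smul s) m,
    condExp_smul s Q m, condExp_smul t G m] with ω h1 h2 h3 h4 h5
  rw [h2, Pi.add_apply, h3, Pi.sub_apply, h4, h5, condExp_of_stronglyMeasurable hm ha ha_int] at h1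
  exact h1

section InnerProductSpace

variable {H : Type*} [NormedAddCommGroup H] [InnerProductSpace ℝ H]

theorem Convex.norm_sub_sq_le_of_isMinOn {K : Set H} (hK : Convex ℝ K) {x p y : H} (hp : p ∈ K)
    (hmin : IsMinOn (fun w => ‖x - w‖) K p) (hy : y ∈ K) : ‖p - y‖ ^ 2 ≤ ‖x - y‖ ^ 2 := by
  have : Nonempty K := ⟨⟨p, hp⟩⟩
  have hinf : ‖x - p‖ = ⨅ w : K, ‖x - w‖ :=
    le_antisymm (le_ciInf fun w => isMinOn_iff.1 hmin w w.2)
      (ciInf_le ⟨0, by rintro _ ⟨w, rfl⟩; positivity⟩ (⟨p, hp⟩ : K))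
  have hvar : ⟪x - p, y - p⟫_ℝ ≤ 0 := (norm_eq_iInf_iff_real_inner_le_zero hK hp).1 hinf y hy
  calc ‖p - y‖ ^ 2 ≤ ‖x - p‖ ^ 2 - 2 * ⟪x - p, y - p⟫_ℝ + ‖y - p‖ ^ 2 := by
        rw [norm_sub_rev]; nlinarith [sq_nonneg ‖x - p‖]
    _ = ‖x - y‖ ^ 2 := by rw [← norm_sub_sq_real]; congr 1; abel_nf

theorem Convex.norm_sub_sq_le_of_isMinOn_sub_smul {K : Set H} (hK : Convex ℝ K) {x g p y : H}
    {τ : ℝ} (hp : p ∈ K) (hmin : IsMinOn (fun w => ‖(x - τ • g) - w‖) K p) (hy : y ∈ K) :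
    ‖p - y‖ ^ 2 ≤ ‖x - y‖ ^ 2 - 2 * τ * ⟪x - y, g⟫_ℝ + τ ^ 2 * ‖g‖ ^ 2 := by
  refine (hK.norm_sub_sq_le_of_isMinOn hp hmin hy).trans_eq ?_
  rw [sub_right_comm, norm_sub_sq_real, inner_smul_right, norm_smul, mul_pow, Real.norm_eq_abs,
    sq_abs]
  ring

theorem ConvexOn.sub_sub_norm_mul_add_inner_le [CompleteSpace H] {s : Set H} {f : H → ℝ}
    (hf : ConvexOn ℝ s f) {x y f' : H} (hx : x ∈ s) (hy : y ∈ s) (hf' : HasGradientAt f f' x)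
    (w r : H) :
    f x - f y - ‖r‖ * ‖x - y‖ + ⟪x - y, w⟫_ℝ ≤ ⟪x - y, f' + w + r⟫_ℝ := by
  have hgrad : ⟪f', y - x⟫_ℝ ≤ f y - f x := by
    simpa using hf.le_sub_of_hasFDerivAt hx hy hf'.hasFDerivAt
  have hr : -(‖x - y‖ * ‖r‖) ≤ ⟪x - y, r⟫_ℝ := neg_le_of_abs_le (abs_real_inner_le_norm _ _)
  have hf'_comm : ⟪x - y, f'⟫_ℝ = -⟪f', y - x⟫_ℝ := by
    rw [real_inner_comm, ← inner_neg_right, neg_sub]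
  rw [inner_add_right, inner_add_right, hf'_comm]
  linarith [mul_comm ‖x - y‖ ‖r‖]

theorem ae_le_condExp_of_le_add_inner [CompleteSpace H] {Ω : Type*} {m m0 : MeasurableSpace Ω}
    {μ : Measure Ω} [IsFiniteMeasure μ] (hm : m ≤ m0) {v w : Ω → H} {c X : Ω → ℝ}
    (hv : StronglyMeasurable[m] v) (hc : StronglyMeasurable[m] c)
    (hw : Integrable w μ) (hw_mean : μ[w|m] =ᵐ[μ] 0) (hX : Integrable X μ)
    (hle : ∀ ω, c ω + ⟪v ω, w ω⟫_ℝ ≤ X ω) : c ≤ᵐ[μ] μ[X|m] := by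
  obtain ⟨s, hs, hs_univ⟩ := (hv.prodMk hc).exists_spanning_measurableSet_norm_le hm μ
  suffices h : ∀ k, ∀ᵐ ω ∂μ, ω ∈ s k → c ω ≤ μ[X|m] ω by
    filter_upwards [ae_all_iff.2 h] with ω hω
    obtain ⟨k, hk⟩ := Set.mem_iUnion.1 (hs_univ ▸ Set.mem_univ ω)
    exact hω k hk
  intro k
  obtain ⟨hsm, -, hbound⟩ := hs k
  have hv_bound : ∀ ω, ‖(s k).indicator v ω‖ ≤ k := by
    intro ω
    by_cases hω : ω ∈ s k
    · simpa [hω] using (norm_fst_le _).trans (hbound ω hω)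
    · simp [hω]
  have hc_int : Integrable ((s k).indicator c) μ := by
    refine Integrable.of_bound ((hc.indicator hsm).mono hm).aestronglyMeasurable k
      (ae_of_all _ fun ω => ?_)
    by_cases hω : ω ∈ s k
    · simpa [hω] using (norm_snd_le _).trans (hbound ω hω)
    · simp [hω]
  have hvw_int : Integrable (fun ω => ⟪(s k).indicator v ω, w ω⟫_ℝ) μ :=
    (innerSL ℝ).integrable_of_bilin_of_bdd_left k
      ((hv.indicator hsm).mono hm).aestronglyMeasurable (ae_of_all _ hv_bound) hw
  have hvw_zero : μ[fun ω => ⟪(s k).indicator v ω, w ω⟫_ℝ|m] =ᵐ[μ] 0 := by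
    filter_upwards [condExp_stronglyMeasurable_bilin_of_bound (innerSL ℝ) hm (hv.indicator hsm)
      hw k (ae_of_all _ hv_bound), hw_mean] with ω h1 h2
    exact h1.trans (by simp [h2])
  have hle_ind :
      (s k).indicator c + (fun ω => ⟪(s k).indicator v ω, w ω⟫_ℝ) ≤ (s k).indicator X := by
    intro ω
    by_cases hω : ω ∈ s k
    · simpa [hω] using hle ω
    · simp [hω]
  filter_upwards [condExp_mono (m := m) (hc_int.add hvw_int) (hX.indicator (hm _ hsm))
      (ae_of_all _ hle_ind), condExp_add hc_int hvw_int m, hvw_zero,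
      condExp_indicator hX hsm] with ω h1 h2 h3 h4 hω
  rw [h2, h4, condExp_of_stronglyMeasurable hm (hc.indicator hsm) hc_int] at h1
  simpa [hω, h3] using h1

end InnerProductSpace

theorem psg_one_step_inequality_general
    {H : Type*} [NormedAddCommGroup H] [InnerProductSpace ℝ H] [CompleteSpace H]
    {Ω : Type*} {m0 : MeasurableSpace Ω} {μ : Measure Ω} [IsProbabilityMeasure μ]
    (ℱ : Filtration ℕ m0)
    -- the closed convex constraint set and its metric projection
    (C : Set H) (hC_convex : Convex ℝ C)
    (proj : H → H) (hproj_mem : ∀ x, proj x ∈ C)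
    (hproj : ∀ x, ∀ w ∈ C, ‖x - proj x‖ ≤ ‖x - w‖)
    -- the objective: convex, Fréchet differentiable (with gradient `j'`) near `C`
    (j : H → ℝ) (j' : H → H) (hj_convex : ConvexOn ℝ Set.univ j)
    (hj_diff : ∃ U : Set H, IsOpen U ∧ C ⊆ U ∧ ∀ x ∈ U, HasGradientAt j (j' x) x)
    -- the iterates, stochastic gradients and their decomposition
    (τ : ℕ → ℝ) (hτ_nonneg : ∀ n, 0 ≤ τ n)
    (u g w r : ℕ → Ω → H)
    (hu_mem : ∀ n ω, u n ω ∈ C)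
    (hupdate : ∀ n ω, u (n + 1) ω = proj (u n ω - τ n • g n ω))
    (hdecomp : ∀ n ω, g n ω = j' (u n ω) + w n ω + r n ω)
    (hu_meas : ∀ n, StronglyMeasurable[ℱ n] (u n))
    (hr_meas : ∀ n, StronglyMeasurable[ℱ n] (r n))
    (hw_mean : ∀ n, μ[w n | ℱ n] =ᵐ[μ] 0)
    -- integrability
    (hg_int : ∀ n, Integrable (g n) μ) (hw_int : ∀ n, Integrable (w n) μ)
    (hg_sq_int : ∀ n, Integrable (fun ω => ‖g n ω‖ ^ 2) μ)
    (hu_sq_int : ∀ n u₀, Integrable (fun ω => ‖u n ω - u₀‖ ^ 2) μ)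
    -- growth condition for the second moment of the stochastic gradient
    (M₁ M₂ : ℝ) (hM₂ : 0 < M₂)
    (hgrowth : ∀ n, ∀ᵐ ω ∂μ,
      (μ[fun ω' => ‖g n ω'‖ ^ 2 | ℱ n]) ω ≤ M₁ + M₂ * ‖u n ω‖ ^ 2) :
    ∀ u₀ ∈ C, ∀ n, ∀ᵐ ω ∂μ,
      (μ[fun ω' => ‖u (n + 1) ω' - u₀‖ ^ 2 | ℱ n]) ω ≤
        ‖u n ω - u₀‖ ^ 2 * (1 + 2 * τ n * ‖r n ω‖ + τ n ^ 2 * (2 * M₂))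
          - 2 * τ n * (j (u n ω) - j u₀) + 2 * τ n * ‖r n ω‖
          + τ n ^ 2 * (M₁ + 2 * M₂ * ‖u₀‖ ^ 2) := by
  obtain ⟨U, -, hCU, hj_grad⟩ := hj_diff
  intro u₀ hu₀ n
  have hm := ℱ.le n
  have hgrad : ∀ ω, HasGradientAt j (j' (u n ω)) (u n ω) := fun ω => hj_grad _ (hCU (hu_mem n ω))
  have hd : StronglyMeasurable[ℱ n] fun ω => u n ω - u₀ := (hu_meas n).sub stronglyMeasurable_const
  have hc : StronglyMeasurable[ℱ n] fun ω => j (u n ω) - j u₀ - ‖r n ω‖ * ‖u n ω - u₀‖ :=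
    (((hu_meas n).comp_of_continuousAt fun ω => (hgrad ω).hasFDerivAt.continuousAt).sub
      stronglyMeasurable_const).sub ((hr_meas n).norm.mul hd.norm)
  have hQ_int : Integrable (fun ω => ⟪u n ω - u₀, g n ω⟫_ℝ) μ :=
    memLp_one_iff_integrable.1 <| (innerSL ℝ).memLp_of_bilin 1
      ((memLp_two_iff_integrable_sq_norm (hd.mono hm).aestronglyMeasurable).2 (hu_sq_int n u₀))
      ((memLp_two_iff_integrable_sq_norm (hg_int n).1).2 (hg_sq_int n))
  have hstep := condExp_le_sub_smul_add_smul hm (2 * τ n) (τ n ^ 2) (hd.norm.pow 2)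
    (hu_sq_int (n + 1) u₀) (hu_sq_int n u₀) hQ_int (hg_sq_int n) fun ω => by
      rw [hupdate]
      exact hC_convex.norm_sub_sq_le_of_isMinOn_sub_smul (hproj_mem _)
        (isMinOn_iff.2 (hproj _)) hu₀
  have hQ := ae_le_condExp_of_le_add_inner hm hd hc (hw_int n) (hw_mean n) hQ_int fun ω => by
    rw [hdecomp]
    exact hj_convex.sub_sub_norm_mul_add_inner_le trivial trivial (hgrad ω) _ _
  filter_upwards [hstep, hQ, hgrowth n] with ω hE hq hG
  simp only [Pi.add_apply, Pi.sub_apply, Pi.smul_apply, Pi.pow_apply, smul_eq_mul] at hE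
  have hu_sq : ‖u n ω‖ ^ 2 ≤ 2 * (‖u n ω - u₀‖ ^ 2 + ‖u₀‖ ^ 2) :=
    (pow_le_pow_left₀ (norm_nonneg _) (norm_le_norm_sub_add _ _) 2).trans add_sq_le
  have hr_le : ‖r n ω‖ * ‖u n ω - u₀‖ ≤ ‖r n ω‖ * (‖u n ω - u₀‖ ^ 2 + 1) :=
    mul_le_mul_of_nonneg_left (by nlinarith [sq_nonneg (‖u n ω - u₀‖ - 1)]) (norm_nonneg _)
  have hτ := hτ_nonneg n
  linarith [mul_le_mul_of_nonneg_left hq (by positivity : 0 ≤ 2 * τ n),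
    mul_le_mul_of_nonneg_left hG (sq_nonneg (τ n)),
    mul_le_mul_of_nonneg_left hu_sq (by positivity : 0 ≤ τ n ^ 2 * M₂),
    mul_le_mul_of_nonneg_left hr_le (by positivity : 0 ≤ 2 * τ n)]

/-- One-step inequality for the projected stochastic gradient method: for every `u ∈ C`,
with `M₃ := M₁ + 2 M₂ ‖u‖²` and `M₄ := 2 M₂`, almost surely
`E[‖u_{n+1} - u‖² | ℱ n] ≤ ‖u_n - u‖² (1 + 2 τ_n ‖r_n‖ + τ_n² M₄)
  - 2 τ_n (j(u_n) - j(u)) + 2 τ_n ‖r_n‖ + τ_n² M₃`. -/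
theorem psg_one_step_inequality
    {H : Type*} [NormedAddCommGroup H] [InnerProductSpace ℝ H] [CompleteSpace H]
    {Ω : Type*} {m0 : MeasurableSpace Ω} {μ : Measure Ω} [IsProbabilityMeasure μ]
    (ℱ : Filtration ℕ m0)
    -- the closed convex constraint set and its metric projection
    (C : Set H) (hC_ne : C.Nonempty) (hC_closed : IsClosed C) (hC_convex : Convex ℝ C)
    (proj : H → H) (hproj_mem : ∀ x, proj x ∈ C)
    (hproj : ∀ x, ∀ w ∈ C, ‖x - proj x‖ ≤ ‖x - w‖)
    -- the objective: convex, Fréchet differentiable (with gradient `j'`) near `C`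
    (j : H → ℝ) (j' : H → H) (hj_convex : ConvexOn ℝ Set.univ j)
    (hj_diff : ∃ U : Set H, IsOpen U ∧ C ⊆ U ∧ ∀ x ∈ U, HasGradientAt j (j' x) x)
    -- the iterates, stochastic gradients and their decomposition
    (τ : ℕ → ℝ) (hτ_nonneg : ∀ n, 0 ≤ τ n)
    (u g w r : ℕ → Ω → H)
    (hu_mem : ∀ n ω, u n ω ∈ C)
    (hupdate : ∀ n ω, u (n + 1) ω = proj (u n ω - τ n • g n ω))
    (hdecomp : ∀ n ω, g n ω = j' (u n ω) + w n ω + r n ω)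
    (hu_meas : ∀ n, StronglyMeasurable[ℱ n] (u n))
    (hr_meas : ∀ n, StronglyMeasurable[ℱ n] (r n))
    (hw_mean : ∀ n, μ[w n | ℱ n] =ᵐ[μ] 0)
    -- integrability
    (hg_int : ∀ n, Integrable (g n) μ) (hw_int : ∀ n, Integrable (w n) μ)
    (hg_sq_int : ∀ n, Integrable (fun ω => ‖g n ω‖ ^ 2) μ)
    (hu_sq_int : ∀ n u₀, Integrable (fun ω => ‖u n ω - u₀‖ ^ 2) μ)
    -- growth condition for the second moment of the stochastic gradient
    (M₁ M₂ : ℝ) (hM₁ : 0 < M₁) (hM₂ : 0 < M₂)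
    (hgrowth : ∀ n, ∀ᵐ ω ∂μ,
      (μ[fun ω' => ‖g n ω'‖ ^ 2 | ℱ n]) ω ≤ M₁ + M₂ * ‖u n ω‖ ^ 2) :
    ∀ u₀ ∈ C, ∀ n, ∀ᵐ ω ∂μ,
      (μ[fun ω' => ‖u (n + 1) ω' - u₀‖ ^ 2 | ℱ n]) ω ≤
        ‖u n ω - u₀‖ ^ 2 * (1 + 2 * τ n * ‖r n ω‖ + τ n ^ 2 * (2 * M₂))
          - 2 * τ n * (j (u n ω) - j u₀) + 2 * τ n * ‖r n ω‖
          + τ n ^ 2 * (M₁ + 2 * M₂ * ‖u₀‖ ^ 2) :=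
  psg_one_step_inequality_general ℱ C hC_convex proj hproj_mem hproj j j' hj_convex hj_diff τ
    hτ_nonneg u g w r hu_mem hupdate hdecomp hu_meas hr_meas hw_mean hg_int hw_int hg_sq_int
    hu_sq_int M₁ M₂ hM₂ hgrowth
end

section
/- Let H be a real Hilbert space, C ⊆ H a nonempty closed convex set, π_C the metric projection onto C, and j : H → ℝ Fréchet differentiable near C and μ-strongly convex for some μ > 0, with minimizer ū over C. On a probability space with filtration {F_n}, let {u_n} ⊂ C satisfy u_{n+1} = π_C(u_n − τ_n g_n) with unbiased stochastic gradients: E[g_n | F_n] = ∇j(u_n), u_n F_n-measurable, and E[‖g_n‖² | F_n] ≤ M₁ + M₂‖u_n‖² almost surely for constants M₁, M₂ > 0. Set e_n := E[‖u_n − ū‖²]. Then for all n, e_{n+1} ≤ e_n (1 − 2μτ_n + 2τ_n² M₂) + τ_n² (M₁ + 2M₂‖ū‖²). -/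
open MeasureTheory Filter

open scoped RealInnerProductSpace

/-!
Since `ū ∈ C` and the projection does not increase distances to points of `C`,
`‖u (n+1) - ū‖² ≤ ‖u n - ū‖² - 2 τ ⟪g n, u n - ū⟫ + τ² ‖g n‖²` pointwise. In expectation the cross
term may be conditioned on `ℱ n`, where `g n` becomes `∇j (u n)`, and
`⟪∇j x, x - ū⟫ ≥ μ ‖x - ū‖²` on `C` by strong convexity and first-order optimality of `ū`. The last
term is bounded by the growth condition together with `‖u n‖² ≤ 2 ‖u n - ū‖² + 2 ‖ū‖²`.
-/

section Deterministic

variable {H : Type*} [NormedAddCommGroup H] [InnerProductSpace ℝ H]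

/-- The nearest point `p` satisfies `⟪x - p, w - p⟫ ≤ 0`: the angle at `p` in the triangle
`x p w` is obtuse. -/
theorem Convex.norm_sub_le_of_isMinOn_norm_sub {C : Set H} (hC : Convex ℝ C) {x p w : H}
    (hp : p ∈ C) (hmin : IsMinOn (fun z => ‖x - z‖) C p) (hw : w ∈ C) :
    ‖p - w‖ ≤ ‖x - w‖ := by
  have hobtuse : ⟪x - p, w - p⟫ ≤ 0 :=
    (norm_eq_iInf_iff_real_inner_le_zero hC hp).1 (hmin.iInf_eq hp).symm w hw
  have hacute : 0 ≤ ⟪x - p, p - w⟫ := by rw [← neg_sub w p, inner_neg_right]; linarith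
  have hsplit := norm_add_sq_real (x - p) (p - w)
  rw [sub_add_sub_cancel] at hsplit
  refine pow_le_pow_iff_left₀ (norm_nonneg _) (norm_nonneg _) two_ne_zero |>.1 ?_
  nlinarith [sq_nonneg ‖x - p‖]

theorem Convex.sq_norm_sub_le_of_isMinOn_norm_sub_smul {C : Set H} (hC : Convex ℝ C)
    {x d p w : H} {τ : ℝ} (hp : p ∈ C) (hmin : IsMinOn (fun z => ‖(x - τ • d) - z‖) C p)
    (hw : w ∈ C) :
    ‖p - w‖ ^ 2 ≤ ‖x - w‖ ^ 2 - 2 * τ * ⟪d, x - w⟫ + τ ^ 2 * ‖d‖ ^ 2 := by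
  have hstep : (x - τ • d) - w = (x - w) - τ • d := by abel
  calc ‖p - w‖ ^ 2 ≤ ‖(x - w) - τ • d‖ ^ 2 := by
        rw [← hstep]; gcongr; exact hC.norm_sub_le_of_isMinOn_norm_sub hp hmin hw
    _ = ‖x - w‖ ^ 2 - 2 * τ * ⟪d, x - w⟫ + τ ^ 2 * ‖d‖ ^ 2 := by
        rw [norm_sub_sq_real, real_inner_smul_right, real_inner_comm, norm_smul, mul_pow,
          Real.norm_eq_abs, sq_abs]
        ring

theorem IsMinOn.inner_gradient_sub_nonneg [CompleteSpace H] {f : H → ℝ} {f' a y : H}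
    {C : Set H} (hmin : IsMinOn f C a) (hC : Convex ℝ C) (hf : HasGradientAt f f' a)
    (ha : a ∈ C) (hy : y ∈ C) : 0 ≤ ⟪f', y - a⟫ := by
  have hcone : y - a ∈ posTangentConeAt C a :=
    sub_mem_posTangentConeAt_of_segment_subset (hC.segment_subset ha hy)
  simpa using (hmin.localize.on_subset le_rfl).hasFDerivWithinAt_nonneg
    hf.hasFDerivAt.hasFDerivWithinAt hcone

theorem mul_sq_norm_sub_le_inner_sub_of_strongConvex {f : H → ℝ} {f' : H → H} {c : ℝ}
    (hf : ∀ x y, f x + ⟪f' x, y - x⟫ + c / 2 * ‖y - x‖ ^ 2 ≤ f y) (x y : H) :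
    c * ‖x - y‖ ^ 2 ≤ ⟪f' x - f' y, x - y⟫ := by
  have hxy := hf x y
  have hyx := hf y x
  rw [← neg_sub x y, inner_neg_right, norm_neg] at hxy
  rw [inner_sub_left]
  linarith

theorem IsMinOn.mul_sq_norm_sub_le_inner_of_strongConvex [CompleteSpace H] {f : H → ℝ}
    {f' : H → H} {c : ℝ} {C : Set H} {a x : H} (hmin : IsMinOn f C a) (hC : Convex ℝ C)
    (hf : ∀ x y, f x + ⟪f' x, y - x⟫ + c / 2 * ‖y - x‖ ^ 2 ≤ f y)
    (hgrad : HasGradientAt f (f' a) a) (ha : a ∈ C) (hx : x ∈ C) :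
    c * ‖x - a‖ ^ 2 ≤ ⟪f' x, x - a⟫ := by
  have hopt := hmin.inner_gradient_sub_nonneg hC hgrad ha hx
  have hmono := mul_sq_norm_sub_le_inner_sub_of_strongConvex hf x a
  rw [inner_sub_left] at hmono
  linarith

end Deterministic

section Expectation

variable {Ω H : Type*} {m m0 : MeasurableSpace Ω} {μ : Measure Ω}
  [NormedAddCommGroup H] {b : H}

theorem integral_sq_norm_le_two_mul_integral_sq_norm_sub_add [IsProbabilityMeasure μ]
    {X : Ω → H} (hX : Integrable (fun ω => ‖X ω‖ ^ 2) μ)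
    (hXb : Integrable (fun ω => ‖X ω - b‖ ^ 2) μ) :
    ∫ ω, ‖X ω‖ ^ 2 ∂μ ≤ 2 * ∫ ω, ‖X ω - b‖ ^ 2 ∂μ + 2 * ‖b‖ ^ 2 := by
  have hsplit : ∀ ω, ‖X ω‖ ^ 2 ≤ 2 * ‖X ω - b‖ ^ 2 + 2 * ‖b‖ ^ 2 := fun ω => by
    have := norm_sub_norm_le (X ω) b
    nlinarith [add_sq_le (a := ‖X ω - b‖) (b := ‖b‖), norm_nonneg (X ω), norm_nonneg b]
  calc ∫ ω, ‖X ω‖ ^ 2 ∂μ ≤ ∫ ω, 2 * ‖X ω - b‖ ^ 2 + 2 * ‖b‖ ^ 2 ∂μ :=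
        integral_mono hX ((hXb.const_mul 2).add (integrable_const _)) hsplit
    _ = 2 * ∫ ω, ‖X ω - b‖ ^ 2 ∂μ + 2 * ‖b‖ ^ 2 := by
        rw [integral_add (hXb.const_mul 2) (integrable_const _), integral_const_mul]
        simp

theorem integral_le_of_condExp_le [IsFiniteMeasure μ] (hm : m ≤ m0) {f h : Ω → ℝ}
    (hh : Integrable h μ) (hle : μ[f | m] ≤ᵐ[μ] h) : ∫ ω, f ω ∂μ ≤ ∫ ω, h ω ∂μ := by
  rw [← integral_condExp hm]
  exact integral_mono_ae integrable_condExp hh hle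

theorem integral_sq_norm_le_of_condExp_le [IsProbabilityMeasure μ] (hm : m ≤ m0)
    {g X : Ω → H} {M₁ M₂ : ℝ} (hM₂ : 0 ≤ M₂) (hX : Integrable (fun ω => ‖X ω‖ ^ 2) μ)
    (hXb : Integrable (fun ω => ‖X ω - b‖ ^ 2) μ)
    (hgrowth : ∀ᵐ ω ∂μ, (μ[fun ω' => ‖g ω'‖ ^ 2 | m]) ω ≤ M₁ + M₂ * ‖X ω‖ ^ 2) :
    ∫ ω, ‖g ω‖ ^ 2 ∂μ ≤ M₁ + M₂ * (2 * ∫ ω, ‖X ω - b‖ ^ 2 ∂μ + 2 * ‖b‖ ^ 2) := by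
  calc ∫ ω, ‖g ω‖ ^ 2 ∂μ ≤ ∫ ω, M₁ + M₂ * ‖X ω‖ ^ 2 ∂μ :=
        integral_le_of_condExp_le hm ((integrable_const _).add (hX.const_mul _)) hgrowth
    _ = M₁ + M₂ * ∫ ω, ‖X ω‖ ^ 2 ∂μ := by
        rw [integral_add (integrable_const _) (hX.const_mul _), integral_const_mul]
        simp
    _ ≤ M₁ + M₂ * (2 * ∫ ω, ‖X ω - b‖ ^ 2 ∂μ + 2 * ‖b‖ ^ 2) := by
        gcongr
        exact integral_sq_norm_le_two_mul_integral_sq_norm_sub_add hX hXb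

theorem integral_le_integral_sub_mul_add_mul {Y A B D : Ω → ℝ} (hY : Integrable Y μ)
    (hA : Integrable A μ) (hB : Integrable B μ) (hD : Integrable D μ) {a b : ℝ}
    (h : ∀ ω, Y ω ≤ A ω - a * B ω + b * D ω) :
    ∫ ω, Y ω ∂μ ≤ ∫ ω, A ω ∂μ - a * ∫ ω, B ω ∂μ + b * ∫ ω, D ω ∂μ := by
  have hAB : Integrable (fun ω => A ω - a * B ω) μ := hA.sub (hB.const_mul a)
  rw [← integral_const_mul, ← integral_const_mul, ← integral_sub hA (hB.const_mul a),
    ← integral_add hAB (hD.const_mul b)]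
  exact integral_mono hY (hAB.add (hD.const_mul b)) h

variable [InnerProductSpace ℝ H]

theorem MeasureTheory.MemLp.integrable_inner {f g : Ω → H} (hf : MemLp f 2 μ)
    (hg : MemLp g 2 μ) :
    Integrable (fun ω => ⟪f ω, g ω⟫) μ :=
  (L2.integrable_inner (𝕜 := ℝ) hf.toLp hg.toLp).congr <| by
    filter_upwards [hf.coeFn_toLp, hg.coeFn_toLp] with ω hfω hgω
    rw [hfω, hgω]

/-- Self-adjointness of the conditional expectation on `L²`. -/
theorem integral_inner_condExp [CompleteSpace H] [IsFiniteMeasure μ] (hm : m ≤ m0)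
    {f v : Ω → H} (hf : MemLp f 2 μ) (hv : MemLp v 2 μ) (hvm : AEStronglyMeasurable[m] v μ) :
    ∫ ω, ⟪(μ[f | m]) ω, v ω⟫ ∂μ = ∫ ω, ⟪f ω, v ω⟫ ∂μ := by
  have hvm' : AEStronglyMeasurable[m] (hv.toLp v : Ω → H) μ :=
    hvm.congr hv.coeFn_toLp.symm
  have hL2 := inner_condExpL2_eq_inner_fun (𝕜 := ℝ) hm (hf.toLp f) (hv.toLp v) hvm'
  rw [L2.inner_def, L2.inner_def] at hL2
  calc ∫ ω, ⟪(μ[f | m]) ω, v ω⟫ ∂μ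
      = ∫ ω, ⟪(condExpL2 H ℝ hm (hf.toLp f) : Ω → H) ω, hv.toLp v ω⟫ ∂μ := by
        refine integral_congr_ae ?_
        filter_upwards [hf.condExpL2_ae_eq_condExp (𝕜 := ℝ) hm, hv.coeFn_toLp] with ω h1 h2
        rw [h1, h2]
    _ = ∫ ω, ⟪hf.toLp f ω, hv.toLp v ω⟫ ∂μ := hL2
    _ = ∫ ω, ⟪f ω, v ω⟫ ∂μ := by
        refine integral_congr_ae ?_
        filter_upwards [hf.coeFn_toLp, hv.coeFn_toLp] with ω h1 h2
        rw [h1, h2]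

theorem mul_integral_sq_norm_le_integral_inner_of_condExp_eq [CompleteSpace H]
    [IsFiniteMeasure μ] (hm : m ≤ m0) {g G v : Ω → H} (hg : MemLp g 2 μ) (hv : MemLp v 2 μ)
    (hvm : AEStronglyMeasurable[m] v μ) (hG : μ[g | m] =ᵐ[μ] G) {c : ℝ}
    (hcoercive : ∀ ω, c * ‖v ω‖ ^ 2 ≤ ⟪G ω, v ω⟫) :
    c * ∫ ω, ‖v ω‖ ^ 2 ∂μ ≤ ∫ ω, ⟪g ω, v ω⟫ ∂μ := by
  have hG_L2 : MemLp G 2 μ := (hg.condExp one_le_two).ae_eq hG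
  have hv_sq : Integrable (fun ω => ‖v ω‖ ^ 2) μ := (memLp_two_iff_integrable_sq_norm hv.1).1 hv
  rw [← integral_inner_condExp hm hg hv hvm, ← integral_const_mul]
  calc ∫ ω, c * ‖v ω‖ ^ 2 ∂μ ≤ ∫ ω, ⟪G ω, v ω⟫ ∂μ :=
        integral_mono (hv_sq.const_mul c) (hG_L2.integrable_inner hv) hcoercive
    _ = ∫ ω, ⟪(μ[g | m]) ω, v ω⟫ ∂μ := by
        refine integral_congr_ae ?_
        filter_upwards [hG] with ω hω
        rw [hω]

end Expectation

theorem psg_strongly_convex_expected_recursion_general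
    {H : Type*} [NormedAddCommGroup H] [InnerProductSpace ℝ H] [CompleteSpace H]
    {Ω : Type*} {m0 : MeasurableSpace Ω} {μ : Measure Ω} [IsProbabilityMeasure μ]
    (ℱ : Filtration ℕ m0)
    (C : Set H) (hC_convex : Convex ℝ C)
    (proj : H → H) (hproj_mem : ∀ x, proj x ∈ C)
    (hproj : ∀ x, ∀ w ∈ C, ‖x - proj x‖ ≤ ‖x - w‖)
    (j : H → ℝ) (j' : H → H)
    (hj_diff : ∃ U : Set H, IsOpen U ∧ C ⊆ U ∧ ∀ x ∈ U, HasGradientAt j (j' x) x)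
    (μc : ℝ)
    (hj_sconvex : ∀ x y : H,
      j x + (inner ℝ (j' x) (y - x) : ℝ) + μc / 2 * ‖y - x‖ ^ 2 ≤ j y)
    (ub : H) (hub_mem : ub ∈ C) (hub_min : ∀ v ∈ C, j ub ≤ j v)
    (τ : ℕ → ℝ) (hτ_nonneg : ∀ n, 0 ≤ τ n)
    (u g : ℕ → Ω → H)
    (hu_mem : ∀ n ω, u n ω ∈ C)
    (hupdate : ∀ n ω, u (n + 1) ω = proj (u n ω - τ n • g n ω))
    (hu_meas : ∀ n, StronglyMeasurable[ℱ n] (u n))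
    -- unbiased stochastic gradients
    (hg_unbiased : ∀ n, μ[g n | ℱ n] =ᵐ[μ] fun ω => j' (u n ω))
    (hg_int : ∀ n, Integrable (g n) μ)
    (hg_sq_int : ∀ n, Integrable (fun ω => ‖g n ω‖ ^ 2) μ)
    (hu_sq_int : ∀ n u₀, Integrable (fun ω => ‖u n ω - u₀‖ ^ 2) μ)
    (M₁ M₂ : ℝ) (hM₂ : 0 < M₂)
    (hgrowth : ∀ n, ∀ᵐ ω ∂μ,
      (μ[fun ω' => ‖g n ω'‖ ^ 2 | ℱ n]) ω ≤ M₁ + M₂ * ‖u n ω‖ ^ 2)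
    (e : ℕ → ℝ) (he : ∀ n, e n = ∫ ω, ‖u n ω - ub‖ ^ 2 ∂μ) :
    ∀ n, e (n + 1) ≤ e n * (1 - 2 * μc * τ n + 2 * τ n ^ 2 * M₂)
      + τ n ^ 2 * (M₁ + 2 * M₂ * ‖ub‖ ^ 2) := by
  intro n
  have hm : ℱ n ≤ m0 := ℱ.le n
  have hvm : StronglyMeasurable[ℱ n] (fun ω => u n ω - ub) :=
    (hu_meas n).sub stronglyMeasurable_const
  have hv : MemLp (fun ω => u n ω - ub) 2 μ :=
    (memLp_two_iff_integrable_sq_norm (hvm.mono hm).aestronglyMeasurable).2 (hu_sq_int n ub)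
  have hg : MemLp (g n) 2 μ := (memLp_two_iff_integrable_sq_norm (hg_int n).1).2 (hg_sq_int n)
  obtain ⟨U, -, hCU, hgrad⟩ := hj_diff
  have hdescent : μc * e n ≤ ∫ ω, ⟪g n ω, u n ω - ub⟫ ∂μ := by
    rw [he n]
    refine mul_integral_sq_norm_le_integral_inner_of_condExp_eq hm hg hv
      hvm.aestronglyMeasurable (hg_unbiased n) fun ω => ?_
    exact (isMinOn_iff.2 hub_min).mul_sq_norm_sub_le_inner_of_strongConvex hC_convex hj_sconvex
      (hgrad ub (hCU hub_mem)) hub_mem (hu_mem n ω)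
  have hsecond : ∫ ω, ‖g n ω‖ ^ 2 ∂μ ≤ M₁ + M₂ * (2 * e n + 2 * ‖ub‖ ^ 2) := by
    rw [he n]
    exact integral_sq_norm_le_of_condExp_le hm hM₂.le (by simpa using hu_sq_int n 0)
      (hu_sq_int n ub) (hgrowth n)
  have hstep : e (n + 1) ≤ e n - 2 * τ n * ∫ ω, ⟪g n ω, u n ω - ub⟫ ∂μ
      + τ n ^ 2 * ∫ ω, ‖g n ω‖ ^ 2 ∂μ := by
    rw [he, he]
    refine integral_le_integral_sub_mul_add_mul (hu_sq_int (n + 1) ub) (hu_sq_int n ub)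
      (hg.integrable_inner hv) (hg_sq_int n) fun ω => ?_
    rw [hupdate]
    exact hC_convex.sq_norm_sub_le_of_isMinOn_norm_sub_smul (hproj_mem _)
      (isMinOn_iff.2 (hproj _)) hub_mem
  have hdescent' := mul_le_mul_of_nonneg_left hdescent (mul_nonneg zero_le_two (hτ_nonneg n))
  have hsecond' := mul_le_mul_of_nonneg_left hsecond (sq_nonneg (τ n))
  linarith

/-- One-step recursion for `e n = E[‖u n - ū‖²]` in the strongly convex case with unbiased
stochastic gradients:
`e (n+1) ≤ e n (1 - 2 μc τ n + 2 τ n² M₂) + τ n² (M₁ + 2 M₂ ‖ū‖²)`. -/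
theorem psg_strongly_convex_expected_recursion
    {H : Type*} [NormedAddCommGroup H] [InnerProductSpace ℝ H] [CompleteSpace H]
    {Ω : Type*} {m0 : MeasurableSpace Ω} {μ : Measure Ω} [IsProbabilityMeasure μ]
    (ℱ : Filtration ℕ m0)
    (C : Set H) (hC_ne : C.Nonempty) (hC_closed : IsClosed C) (hC_convex : Convex ℝ C)
    (proj : H → H) (hproj_mem : ∀ x, proj x ∈ C)
    (hproj : ∀ x, ∀ w ∈ C, ‖x - proj x‖ ≤ ‖x - w‖)
    (j : H → ℝ) (j' : H → H)
    (hj_diff : ∃ U : Set H, IsOpen U ∧ C ⊆ U ∧ ∀ x ∈ U, HasGradientAt j (j' x) x)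
    (μc : ℝ) (hμc : 0 < μc)
    (hj_sconvex : ∀ x y : H,
      j x + (inner ℝ (j' x) (y - x) : ℝ) + μc / 2 * ‖y - x‖ ^ 2 ≤ j y)
    (ub : H) (hub_mem : ub ∈ C) (hub_min : ∀ v ∈ C, j ub ≤ j v)
    (τ : ℕ → ℝ) (hτ_nonneg : ∀ n, 0 ≤ τ n)
    (u g : ℕ → Ω → H)
    (hu_mem : ∀ n ω, u n ω ∈ C)
    (hupdate : ∀ n ω, u (n + 1) ω = proj (u n ω - τ n • g n ω))
    (hu_meas : ∀ n, StronglyMeasurable[ℱ n] (u n))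
    -- unbiased stochastic gradients
    (hg_unbiased : ∀ n, μ[g n | ℱ n] =ᵐ[μ] fun ω => j' (u n ω))
    (hg_int : ∀ n, Integrable (g n) μ)
    (hg_sq_int : ∀ n, Integrable (fun ω => ‖g n ω‖ ^ 2) μ)
    (hu_sq_int : ∀ n u₀, Integrable (fun ω => ‖u n ω - u₀‖ ^ 2) μ)
    (M₁ M₂ : ℝ) (hM₁ : 0 < M₁) (hM₂ : 0 < M₂)
    (hgrowth : ∀ n, ∀ᵐ ω ∂μ,
      (μ[fun ω' => ‖g n ω'‖ ^ 2 | ℱ n]) ω ≤ M₁ + M₂ * ‖u n ω‖ ^ 2)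
    (e : ℕ → ℝ) (he : ∀ n, e n = ∫ ω, ‖u n ω - ub‖ ^ 2 ∂μ) :
    ∀ n, e (n + 1) ≤ e n * (1 - 2 * μc * τ n + 2 * τ n ^ 2 * M₂)
      + τ n ^ 2 * (M₁ + 2 * M₂ * ‖ub‖ ^ 2) :=
  psg_strongly_convex_expected_recursion_general ℱ C hC_convex proj hproj_mem hproj j j' hj_diff μc
    hj_sconvex ub hub_mem hub_min τ hτ_nonneg u g hu_mem hupdate hu_meas hg_unbiased hg_int
    hg_sq_int hu_sq_int M₁ M₂ hM₂ hgrowth e he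
end

section
/- Let H be a real Hilbert space, C ⊆ H a nonempty, bounded, closed convex set, π_C the metric projection, and j : H → ℝ convex and Fréchet differentiable near C with a minimizer ū over C. Let {u_n} ⊂ C satisfy u_{n+1} = π_C(u_n − τ_n g_n) with unbiased stochastic gradients (E[g_n | F_n] = ∇j(u_n), u_n F_n-measurable) that are uniformly bounded: E[‖g_n‖² | F_n] ≤ M almost surely for some M > 0. Let D_C := sup_{u∈C} ‖u − u₁‖ and fix the number of iterations N; use the constant step size τ_n = D_C/√(MN) for n = 1, …, N, and define the averaged iterate ũ_1^N := (1/N) Σ_{n=1}^N u_n. Then E[j(ũ_1^N) − j(ū)] ≤ D_C √M / √N. -/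
/-!
Projection onto `C` does not increase the distance to `ū ∈ C`, so each step satisfies
`2τ⟪uₙ - ū, gₙ⟫ ≤ ‖uₙ - ū‖² - ‖uₙ₊₁ - ū‖² + τ²‖gₙ‖²`, and the sum over `n` telescopes.
In expectation, `uₙ` being `ℱₙ`-measurable lets `E[gₙ | ℱₙ] = ∇j(uₙ)` replace `gₙ`, and
`j(uₙ) - j(ū) ≤ ⟪uₙ - ū, ∇j(uₙ)⟫` by convexity; Jensen's inequality for the average yields
`E[j(ũ) - j(ū)] ≤ (D_C² + Nτ²M) / (2τN)`, and `τ = D_C / √(MN)` balances the two terms.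
-/

open MeasureTheory Filter Finset RealInnerProductSpace

section Deterministic

variable {H : Type*} [NormedAddCommGroup H] [InnerProductSpace ℝ H]

theorem norm_sub_le_of_forall_norm_sub_le {C : Set H} (hC : Convex ℝ C) {x p w : H}
    (hp : p ∈ C) (hmin : ∀ v ∈ C, ‖x - p‖ ≤ ‖x - v‖) (hw : w ∈ C) :
    ‖p - w‖ ≤ ‖x - w‖ := by
  have : Nonempty C := ⟨⟨p, hp⟩⟩
  have hinf : ‖x - p‖ = ⨅ v : C, ‖x - v‖ :=
    le_antisymm (le_ciInf fun v => hmin v v.2) (ciInf_le (f := fun v : C => ‖x - v‖)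
      ⟨0, by rintro _ ⟨v, rfl⟩; exact norm_nonneg _⟩ ⟨p, hp⟩)
  -- variational inequality of the projection: `⟪x - p, w - p⟫ ≤ 0`
  have hvi := (norm_eq_iInf_iff_real_inner_le_zero hC hp).1 hinf w hw
  have hexp : ‖x - w‖ ^ 2 = ‖x - p‖ ^ 2 - 2 * ⟪x - p, w - p⟫ + ‖p - w‖ ^ 2 := by
    rw [← sub_add_sub_cancel x p w, norm_add_sq_real, ← neg_sub w p, inner_neg_right]
    ring
  refine (pow_le_pow_iff_left₀ (norm_nonneg _) (norm_nonneg _) two_ne_zero).1 ?_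
  nlinarith [sq_nonneg ‖x - p‖]

theorem norm_sub_smul_sub_sq (u g w : H) (τ : ℝ) :
    ‖u - τ • g - w‖ ^ 2 = ‖u - w‖ ^ 2 - 2 * τ * ⟪u - w, g⟫ + τ ^ 2 * ‖g‖ ^ 2 := by
  rw [sub_right_comm, norm_sub_sq_real, real_inner_smul_right, norm_smul, Real.norm_eq_abs,
    mul_pow, sq_abs]
  ring

theorem two_mul_sum_inner_le_of_norm_sub_le (τ : ℝ) (w : H) (N : ℕ) {u g : ℕ → H}
    (hstep : ∀ n ∈ Icc 1 N, ‖u (n + 1) - w‖ ≤ ‖u n - τ • g n - w‖) :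
    2 * τ * ∑ n ∈ Icc 1 N, ⟪u n - w, g n⟫ ≤ ‖u 1 - w‖ ^ 2 + τ ^ 2 * ∑ n ∈ Icc 1 N, ‖g n‖ ^ 2 := by
  have hstep_sq : ∀ n ∈ Icc 1 N, 2 * τ * ⟪u n - w, g n⟫ ≤
      ‖u n - w‖ ^ 2 - ‖u (n + 1) - w‖ ^ 2 + τ ^ 2 * ‖g n‖ ^ 2 := fun n hn => by
    have := pow_le_pow_left₀ (norm_nonneg _) (hstep n hn) 2
    rw [norm_sub_smul_sub_sq] at this
    linarith
  have htelescope : ∑ n ∈ Icc 1 N, (‖u (n + 1) - w‖ ^ 2 - ‖u n - w‖ ^ 2)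
      = ‖u (N + 1) - w‖ ^ 2 - ‖u 1 - w‖ ^ 2 := by
    rw [← Finset.Ico_add_one_right_eq_Icc, Finset.sum_Ico_sub (fun n => ‖u n - w‖ ^ 2)]
    omega
  calc 2 * τ * ∑ n ∈ Icc 1 N, ⟪u n - w, g n⟫
      ≤ ∑ n ∈ Icc 1 N, (‖u n - w‖ ^ 2 - ‖u (n + 1) - w‖ ^ 2 + τ ^ 2 * ‖g n‖ ^ 2) := by
        rw [mul_sum]; exact sum_le_sum hstep_sq
    _ = ‖u 1 - w‖ ^ 2 - ‖u (N + 1) - w‖ ^ 2 + τ ^ 2 * ∑ n ∈ Icc 1 N, ‖g n‖ ^ 2 := by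
        rw [sum_sub_distrib] at htelescope
        rw [sum_add_distrib, ← mul_sum, sum_sub_distrib]
        linarith
    _ ≤ _ := by linarith [sq_nonneg ‖u (N + 1) - w‖]

end Deterministic

section Convex

variable {H : Type*} [NormedAddCommGroup H] [InnerProductSpace ℝ H] [CompleteSpace H]
  {j : H → ℝ}

theorem ConvexOn.sub_le_inner_of_hasGradientAt (hj : ConvexOn ℝ Set.univ j) {x v : H}
    (hx : HasGradientAt j v x) (y : H) : j x - j y ≤ ⟪x - y, v⟫ := by
  -- restrict `j` to the line `t ↦ x + t • (y - x)` and compare its slope on `[0, 1]` with `φ' 0`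
  set φ : ℝ → ℝ := fun t => j (t • (y - x) + x)
  have hφ' : HasDerivAt φ ⟪v, y - x⟫ 0 := by
    have hline : HasDerivAt (fun t : ℝ => t • (y - x) + x) (y - x) 0 := by
      simpa using ((hasDerivAt_id (0 : ℝ)).smul_const (y - x)).add_const x
    have hj' : HasFDerivAt j (InnerProductSpace.toDual ℝ H v) ((0 : ℝ) • (y - x) + x) := by
      simpa using hasGradientAt_iff_hasFDerivAt.1 hx
    simpa [φ, Function.comp_def] using hj'.comp_hasDerivAt 0 hline
  have hφ : ConvexOn ℝ Set.univ φ := by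
    simpa [φ, Function.comp_def, AffineMap.lineMap_apply_module'] using
      hj.comp_affineMap (AffineMap.lineMap x y : ℝ →ᵃ[ℝ] H)
  have hslope := hφ.le_slope_of_hasDerivAt (Set.mem_univ 0) (Set.mem_univ 1) one_pos hφ'
  simp only [φ, slope_def_field] at hslope
  rw [← neg_sub y x, inner_neg_left, real_inner_comm]
  norm_num at hslope
  linarith

theorem ConvexOn.map_average_sub_le {ι : Type*} (hj : ConvexOn ℝ Set.univ j) {s : Finset ι}
    (hs : s.Nonempty) {u v : ι → H} (hgrad : ∀ i ∈ s, HasGradientAt j (v i) (u i)) (w : H) :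
    j ((#s : ℝ)⁻¹ • ∑ i ∈ s, u i) - j w ≤ (#s : ℝ)⁻¹ * ∑ i ∈ s, ⟪u i - w, v i⟫ := by
  have hcard : (0 : ℝ) < #s := by exact_mod_cast hs.card_pos
  have hjensen : j (∑ i ∈ s, (#s : ℝ)⁻¹ • u i) ≤ ∑ i ∈ s, (#s : ℝ)⁻¹ • j (u i) :=
    hj.map_sum_le (fun _ _ => by positivity)
      (by rw [sum_const, nsmul_eq_mul]; field_simp) (fun _ _ => Set.mem_univ _)
  have hsub : ∑ i ∈ s, (j (u i) - j w) ≤ ∑ i ∈ s, ⟪u i - w, v i⟫ :=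
    sum_le_sum fun i hi => hj.sub_le_inner_of_hasGradientAt (hgrad i hi) w
  rw [smul_sum]
  rw [sum_sub_distrib, sum_const, nsmul_eq_mul] at hsub
  simp only [smul_eq_mul, ← mul_sum] at hjensen
  have := mul_le_mul_of_nonneg_left hsub (inv_nonneg.2 hcard.le)
  rw [mul_sub, ← mul_assoc, inv_mul_cancel₀ hcard.ne', one_mul] at this
  linarith

end Convex

section Stochastic

variable {Ω : Type*} {m0 : MeasurableSpace Ω} {μ : Measure Ω}
  {H : Type*} [NormedAddCommGroup H] [InnerProductSpace ℝ H]

theorem integrable_inner_of_norm_le {v g : Ω → H} {K : ℝ} (hv : AEStronglyMeasurable v μ)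
    (hvK : ∀ ω, ‖v ω‖ ≤ K) (hg : Integrable g μ) : Integrable (fun ω => ⟪v ω, g ω⟫) μ :=
  (hg.norm.const_mul K).mono' (hv.inner hg.1) <| ae_of_all _ fun ω =>
    (norm_inner_le_norm _ _).trans (mul_le_mul_of_nonneg_right (hvK ω) (norm_nonneg _))

theorem integral_le_of_ae_condExp_le [IsProbabilityMeasure μ] {m : MeasurableSpace Ω}
    (hm : m ≤ m0) {f : Ω → ℝ} {M : ℝ} (hf : ∀ᵐ ω ∂μ, (μ[f|m]) ω ≤ M) : ∫ ω, f ω ∂μ ≤ M := by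
  rw [← integral_condExp hm]
  simpa using integral_mono_ae integrable_condExp (integrable_const M) hf

theorem two_mul_sum_integral_inner_le (τ : ℝ) (w : H) (N : ℕ) {u g : ℕ → Ω → H} {M : ℝ}
    (hstep : ∀ n ∈ Icc 1 N, ∀ ω, ‖u (n + 1) ω - w‖ ≤ ‖u n ω - τ • g n ω - w‖)
    (hu₁ : Integrable (fun ω => ‖u 1 ω - w‖ ^ 2) μ)
    (hinner : ∀ n ∈ Icc 1 N, Integrable (fun ω => ⟪u n ω - w, g n ω⟫) μ)
    (hg : ∀ n ∈ Icc 1 N, Integrable (fun ω => ‖g n ω‖ ^ 2) μ)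
    (hM : ∀ n ∈ Icc 1 N, ∫ ω, ‖g n ω‖ ^ 2 ∂μ ≤ M) :
    2 * τ * ∑ n ∈ Icc 1 N, ∫ ω, ⟪u n ω - w, g n ω⟫ ∂μ
      ≤ ∫ ω, ‖u 1 ω - w‖ ^ 2 ∂μ + N * τ ^ 2 * M := by
  have hpath := integral_mono ((integrable_finsetSum _ hinner).const_mul (2 * τ))
    (hu₁.add ((integrable_finsetSum _ hg).const_mul (τ ^ 2)))
    fun ω => two_mul_sum_inner_le_of_norm_sub_le τ w N fun n hn => hstep n hn ω
  simp only [Pi.add_apply] at hpath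
  rw [integral_const_mul, integral_finsetSum _ hinner, integral_add hu₁
    ((integrable_finsetSum _ hg).const_mul _), integral_const_mul,
    integral_finsetSum _ hg] at hpath
  have hsum : ∑ n ∈ Icc 1 N, ∫ ω, ‖g n ω‖ ^ 2 ∂μ ≤ N * M := by
    simpa using sum_le_sum hM
  nlinarith [sq_nonneg τ]

variable [CompleteSpace H]

theorem integral_map_average_sub_le [IsProbabilityMeasure μ] {ι : Type*}
    (ℱ : ι → MeasurableSpace Ω) (hℱ : ∀ i, ℱ i ≤ m0) {j : H → ℝ} {j' : H → H}
    (hj : ConvexOn ℝ Set.univ j) {s : Finset ι} (hs : s.Nonempty) {u g : ι → Ω → H} (w : H)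
    (hgrad : ∀ i ∈ s, ∀ ω, HasGradientAt j (j' (u i ω)) (u i ω))
    (hunbiased : ∀ i ∈ s, μ[g i|ℱ i] =ᵐ[μ] fun ω => j' (u i ω))
    (hu : ∀ i ∈ s, StronglyMeasurable[ℱ i] (u i)) (hg : ∀ i ∈ s, Integrable (g i) μ)
    (hinner : ∀ i ∈ s, Integrable (fun ω => ⟪u i ω - w, g i ω⟫) μ)
    (havg : Integrable (fun ω => j ((#s : ℝ)⁻¹ • ∑ i ∈ s, u i ω)) μ) :
    ∫ ω, j ((#s : ℝ)⁻¹ • ∑ i ∈ s, u i ω) ∂μ - j w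
      ≤ (#s : ℝ)⁻¹ * ∑ i ∈ s, ∫ ω, ⟪u i ω - w, g i ω⟫ ∂μ := by
  -- `u i - w` is `ℱ i`-measurable, so it can be pulled out of `μ[⟪u i - w, g i⟫ | ℱ i]`
  have hpull : ∀ i ∈ s, (fun ω => ⟪u i ω - w, (μ[g i|ℱ i]) ω⟫)
      =ᵐ[μ] μ[fun ω => ⟪u i ω - w, g i ω⟫|ℱ i] := fun i hi =>
    (condExp_bilin_of_stronglyMeasurable_left (innerSL ℝ)
      ((hu i hi).sub stronglyMeasurable_const) (hinner i hi) (hg i hi)).symm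
  have hae : ∀ᵐ ω ∂μ, j ((#s : ℝ)⁻¹ • ∑ i ∈ s, u i ω) - j w
      ≤ (#s : ℝ)⁻¹ * ∑ i ∈ s, (μ[fun ω => ⟪u i ω - w, g i ω⟫|ℱ i]) ω := by
    filter_upwards [(eventually_all_finset s).2 hunbiased, (eventually_all_finset s).2 hpull]
      with ω hunb hpl
    rw [← sum_congr rfl hpl]
    refine hj.map_average_sub_le hs (fun i hi => ?_) w
    rw [hunb i hi]
    exact hgrad i hi ω
  have hcond := integral_mono_ae (havg.sub (integrable_const _))
    ((integrable_finsetSum _ fun i _ => integrable_condExp).const_mul _) hae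
  simp only [Pi.sub_apply] at hcond
  rwa [integral_sub havg (integrable_const _), integral_const_mul,
    integral_finsetSum _ fun i _ => integrable_condExp, integral_const, probReal_univ, one_smul,
    sum_congr rfl fun i _ => integral_condExp (hℱ i)] at hcond

end Stochastic

theorem inv_mul_le_of_two_mul_optimal_stepsize_mul_le {D M N S : ℝ} (hD : 0 < D) (hM : 0 < M)
    (hN : 0 < N)
    (h : 2 * (D / √(M * N)) * S ≤ D ^ 2 + N * (D / √(M * N)) ^ 2 * M) :
    N⁻¹ * S ≤ D * √M / √N := by
  obtain ⟨s, hs, rfl⟩ : ∃ s, 0 < s ∧ M = s ^ 2 := ⟨√M, by positivity, (Real.sq_sqrt hM.le).symm⟩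
  obtain ⟨t, ht, rfl⟩ : ∃ t, 0 < t ∧ N = t ^ 2 := ⟨√N, by positivity, (Real.sq_sqrt hN.le).symm⟩
  rw [← mul_pow, Real.sqrt_sq (by positivity)] at h
  rw [Real.sqrt_sq hs.le, Real.sqrt_sq ht.le]
  field_simp at h ⊢
  nlinarith

theorem psg_constant_stepsize_estimate_general
    {H : Type*} [NormedAddCommGroup H] [InnerProductSpace ℝ H] [CompleteSpace H]
    {Ω : Type*} {m0 : MeasurableSpace Ω} {μ : Measure Ω} [IsProbabilityMeasure μ]
    (ℱ : Filtration ℕ m0)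
    (C : Set H) (hC_convex : Convex ℝ C)
    (proj : H → H) (hproj_mem : ∀ x, proj x ∈ C)
    (hproj : ∀ x, ∀ w ∈ C, ‖x - proj x‖ ≤ ‖x - w‖)
    (j : H → ℝ) (j' : H → H) (hj_convex : ConvexOn ℝ Set.univ j)
    (hj_diff : ∃ U : Set H, IsOpen U ∧ C ⊆ U ∧ ∀ x ∈ U, HasGradientAt j (j' x) x)
    (ub : H) (hub_mem : ub ∈ C)
    -- deterministic initialization `u₁` and the diameter-type constant `D_C`
    (u₁ : H)
    (DC : ℝ) (hDC : IsLUB ((fun v => ‖v - u₁‖) '' C) DC) (hDC_pos : 0 < DC)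
    -- the fixed number of iterations and constant step sizes
    (N : ℕ) (hN : 1 ≤ N) (M : ℝ) (hM : 0 < M)
    (τ : ℕ → ℝ) (hτ : ∀ n : ℕ, 1 ≤ n → n ≤ N → τ n = DC / Real.sqrt (M * N))
    (u g : ℕ → Ω → H)
    (hu_init : ∀ ω, u 1 ω = u₁)
    (hu_mem : ∀ n ω, u n ω ∈ C)
    (hupdate : ∀ n : ℕ, 1 ≤ n → n ≤ N → ∀ ω, u (n + 1) ω = proj (u n ω - τ n • g n ω))
    (hu_meas : ∀ n, StronglyMeasurable[ℱ n] (u n))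
    (hg_unbiased : ∀ n, μ[g n | ℱ n] =ᵐ[μ] fun ω => j' (u n ω))
    (hg_int : ∀ n, Integrable (g n) μ)
    (hg_sq_int : ∀ n, Integrable (fun ω => ‖g n ω‖ ^ 2) μ)
    -- uniformly bounded second moments of the stochastic gradients
    (hgbound : ∀ n, ∀ᵐ ω ∂μ, (μ[fun ω' => ‖g n ω'‖ ^ 2 | ℱ n]) ω ≤ M)
    (hjavg_int : Integrable (fun ω =>
      j ((N : ℝ)⁻¹ • ∑ n ∈ Finset.Icc 1 N, u n ω)) μ) :
    (∫ ω, j ((N : ℝ)⁻¹ • ∑ n ∈ Finset.Icc 1 N, u n ω) ∂μ) - j ub ≤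
      DC * Real.sqrt M / Real.sqrt N := by
  obtain ⟨U, -, hCU, hgradU⟩ := hj_diff
  have hcard : (#(Icc 1 N) : ℝ) = N := by simp
  have hDC_le : ∀ v ∈ C, ‖v - u₁‖ ≤ DC := fun v hv => hDC.1 ⟨v, hv, rfl⟩
  have hu_bdd : ∀ n ω, ‖u n ω - ub‖ ≤ 2 * DC := fun n ω => by
    linarith [norm_sub_le_norm_sub_add_norm_sub (u n ω) u₁ ub, norm_sub_rev u₁ ub,
      hDC_le _ (hu_mem n ω), hDC_le _ hub_mem]
  have hinner (n : ℕ) : Integrable (fun ω => ⟪u n ω - ub, g n ω⟫) μ :=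
    integrable_inner_of_norm_le (((hu_meas n).mono (ℱ.le n)).sub
      stronglyMeasurable_const).aestronglyMeasurable (hu_bdd n) (hg_int n)
  have hjensen := integral_map_average_sub_le (ℱ ·) ℱ.le hj_convex
    (nonempty_Icc.2 hN) ub (fun n _ ω => hgradU _ (hCU (hu_mem n ω)))
    (fun n _ => hg_unbiased n) (fun n _ => hu_meas n) (fun n _ => hg_int n)
    (fun n _ => hinner n) (by rwa [hcard])
  have hregret := two_mul_sum_integral_inner_le (μ := μ) (DC / √(M * N)) ub N (M := M)
    (fun n hn ω => by
      obtain ⟨h1n, hnN⟩ := mem_Icc.1 hn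
      rw [hupdate n h1n hnN, ← hτ n h1n hnN]
      exact norm_sub_le_of_forall_norm_sub_le hC_convex (hproj_mem _) (hproj _) hub_mem)
    (by simp [hu_init]) (fun n _ => hinner n)
    (fun n _ => hg_sq_int n) (fun n _ => integral_le_of_ae_condExp_le (ℱ.le n) (hgbound n))
  have hinit : ∫ ω, ‖u 1 ω - ub‖ ^ 2 ∂μ ≤ DC ^ 2 := by
    simpa [hu_init, norm_sub_rev u₁ ub] using
      pow_le_pow_left₀ (norm_nonneg _) (hDC_le ub hub_mem) 2
  rw [hcard] at hjensen
  have := inv_mul_le_of_two_mul_optimal_stepsize_mul_le hDC_pos hM (Nat.cast_pos.2 hN)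
    (hregret.trans (add_le_add_left hinit _))
  linarith

/-- Efficiency estimate with constant step sizes on a bounded constraint set:
with `τ n = D_C / √(M N)` for `n = 1, …, N` and `ũ_1^N = (1/N) ∑_{n=1}^N u n`,
`E[j(ũ_1^N) - j ū] ≤ D_C √M / √N`. -/
theorem psg_constant_stepsize_estimate
    {H : Type*} [NormedAddCommGroup H] [InnerProductSpace ℝ H] [CompleteSpace H]
    {Ω : Type*} {m0 : MeasurableSpace Ω} {μ : Measure Ω} [IsProbabilityMeasure μ]
    (ℱ : Filtration ℕ m0)
    (C : Set H) (hC_ne : C.Nonempty) (hC_closed : IsClosed C) (hC_convex : Convex ℝ C)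
    (hC_bdd : Bornology.IsBounded C)
    (proj : H → H) (hproj_mem : ∀ x, proj x ∈ C)
    (hproj : ∀ x, ∀ w ∈ C, ‖x - proj x‖ ≤ ‖x - w‖)
    (j : H → ℝ) (j' : H → H) (hj_convex : ConvexOn ℝ Set.univ j)
    (hj_diff : ∃ U : Set H, IsOpen U ∧ C ⊆ U ∧ ∀ x ∈ U, HasGradientAt j (j' x) x)
    (ub : H) (hub_mem : ub ∈ C) (hub_min : ∀ v ∈ C, j ub ≤ j v)
    -- deterministic initialization `u₁` and the diameter-type constant `D_C`
    (u₁ : H) (hu₁ : u₁ ∈ C)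
    (DC : ℝ) (hDC : IsLUB ((fun v => ‖v - u₁‖) '' C) DC) (hDC_pos : 0 < DC)
    -- the fixed number of iterations and constant step sizes
    (N : ℕ) (hN : 1 ≤ N) (M : ℝ) (hM : 0 < M)
    (τ : ℕ → ℝ) (hτ : ∀ n : ℕ, 1 ≤ n → n ≤ N → τ n = DC / Real.sqrt (M * N))
    (u g : ℕ → Ω → H)
    (hu_init : ∀ ω, u 1 ω = u₁)
    (hu_mem : ∀ n ω, u n ω ∈ C)
    (hupdate : ∀ n : ℕ, 1 ≤ n → n ≤ N → ∀ ω, u (n + 1) ω = proj (u n ω - τ n • g n ω))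
    (hu_meas : ∀ n, StronglyMeasurable[ℱ n] (u n))
    (hg_unbiased : ∀ n, μ[g n | ℱ n] =ᵐ[μ] fun ω => j' (u n ω))
    (hg_int : ∀ n, Integrable (g n) μ)
    (hg_sq_int : ∀ n, Integrable (fun ω => ‖g n ω‖ ^ 2) μ)
    -- uniformly bounded second moments of the stochastic gradients
    (hgbound : ∀ n, ∀ᵐ ω ∂μ, (μ[fun ω' => ‖g n ω'‖ ^ 2 | ℱ n]) ω ≤ M)
    (hjavg_int : Integrable (fun ω =>
      j ((N : ℝ)⁻¹ • ∑ n ∈ Finset.Icc 1 N, u n ω)) μ) :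
    (∫ ω, j ((N : ℝ)⁻¹ • ∑ n ∈ Finset.Icc 1 N, u n ω) ∂μ) - j ub ≤
      DC * Real.sqrt M / Real.sqrt N :=
  psg_constant_stepsize_estimate_general ℱ C hC_convex proj hproj_mem hproj j j' hj_convex hj_diff
    ub hub_mem u₁ DC hDC hDC_pos N hN M hM τ hτ u g hu_init hu_mem hupdate hu_meas hg_unbiased
    hg_int hg_sq_int hgbound hjavg_int
end
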